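/- arXiv:math/0702352 — 2 statements merged into one kernel-verified Lean document; each statement's English description precedes it below -/
import Mathlib

section
/- Let G be a finite irreducible ordered graph, and suppose that G has at most one irreducible induced ordered subgraph (up to order-preserving isomorphism) of order 3, and at most one of order 4. Then G is order-isomorphic to a member of the family 𝒥. -/
open Finset

/-- `IndSub G H` : `G` is an induced ordered subgraph of `H`, i.e. there is an
order-preserving injection of the vertices preserving adjacency and non-adjacency. -/
def IndSub {m n : ℕ} (G : SimpleGraph (Fin m)) (H : SimpleGraph (Fin n)) : Prop :=
  ∃ φ : Fin m ↪o Fin n, ∀ i j : Fin m, G.Adj i j ↔ H.Adj (φ i) (φ j)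

/-- A hereditary property of ordered graphs: a family of ordered graphs (one set of
graphs on `[n]` for each `n`), closed under taking induced ordered subgraphs.  (Closure
under order-preserving isomorphisms is automatic in this encoding, since the only
order-preserving bijection of `Fin n` is the identity.) -/
structure HerProp where
  mem : ∀ n : ℕ, Set (SimpleGraph (Fin n))
  hered : ∀ {m n : ℕ} (G : SimpleGraph (Fin m)) (H : SimpleGraph (Fin n)),
    IndSub G H → H ∈ mem n → G ∈ mem m

/-- The speed of a property: `n ↦ |P_n|`. -/
noncomputable def speed (P : HerProp) (n : ℕ) : ℕ := (P.mem n).ncard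

/-- Generalized Fibonacci numbers `F_{n,k}` of order `k`:
`F_{0,k} = 1`, `F_{n,k} = F_{n-1,k} + ⋯ + F_{n-k,k}` (terms with negative index are 0). -/
def genFib (k : ℕ) : ℕ → ℕ
  | 0 => 1
  | n + 1 => ∑ i ∈ Finset.range k, if i ≤ n then genFib k (n - i) else 0
decreasing_by omega

/-- `lHom G ℓ x y` : vertices `x` and `y` are `ℓ`-homogeneous in `G`
(`x ∼_ℓ y`), i.e. they have the same neighbourhoods outside `N_ℓ(x) ∪ N_ℓ(y)`. -/
def lHom {N : ℕ} (G : SimpleGraph (Fin N)) (ℓ : ℕ) (x y : Fin N) : Prop :=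
  ∀ v : Fin N, ℓ ≤ ((v : ℤ) - (x : ℤ)).natAbs → ℓ ≤ ((v : ℤ) - (y : ℤ)).natAbs →
    (G.Adj x v ↔ G.Adj y v)

/-- `G` contains a `k`-structure of Type 1. -/
def HasType1 {N : ℕ} (G : SimpleGraph (Fin N)) (k : ℕ) : Prop :=
  ∃ (y : Fin N) (x : Fin (2 * k) → Fin N), StrictMono x ∧
    ((∀ i, y < x i) ∨ (∀ i, x i < y)) ∧
    ∀ i j : Fin (2 * k), (j : ℕ) = (i : ℕ) + 1 → (G.Adj y (x i) ↔ ¬ G.Adj y (x j))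

/-- `G` contains a `k`-structure of Type 2 (2(a) or 2(b)). -/
def HasType2 {N : ℕ} (G : SimpleGraph (Fin N)) (k : ℕ) : Prop :=
  ∃ x y : Fin (2 * k) → Fin N, StrictMono x ∧ (StrictMono y ∨ StrictAnti y) ∧
    (∀ i j, x i < y j) ∧
    ∀ i j : Fin (2 * k), (j : ℕ) = (i : ℕ) + 1 → (G.Adj (x i) (y i) ↔ ¬ G.Adj (x j) (y j))

/-- `G` contains a `(k,ℓ)`-structure of Type 3. -/
def HasType3 {N : ℕ} (G : SimpleGraph (Fin N)) (k ℓ : ℕ) : Prop :=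
  ∃ (x y : Fin (2 * k) → Fin N) (z : Fin (2 * k) → Fin (ℓ - 1) → Fin N),
    (∀ i t, x i < z i t) ∧ (∀ i, StrictMono (z i)) ∧ (∀ i t, z i t < y i) ∧
    (∀ i, x i < y i) ∧
    (∀ i j : Fin (2 * k), (j : ℕ) = (i : ℕ) + 1 → y i < x j) ∧
    ∀ i j : Fin (2 * k), (j : ℕ) = (i : ℕ) + 1 → (G.Adj (x i) (y i) ↔ ¬ G.Adj (x j) (y j))

/-- `S_n(G)` : the number of pairwise non-isomorphic (as ordered graphs) induced ordered
subgraphs of `G` of order `n`. -/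
noncomputable def numSub {N : ℕ} (G : SimpleGraph (Fin N)) (n : ℕ) : ℕ :=
  {H : SimpleGraph (Fin n) | IndSub H G}.ncard
/-- The ordered graph `M^<_I(X,Y)` with `|X| = |Y| = m` (vertices `0,…,m-1` playing the
role of `x_1 < … < x_m` and vertices `m,…,2m-1` the role of `y_1 < … < y_m`). -/
def Mlt (m : ℕ) (I1 I2 I3 I4 : Bool) : SimpleGraph (Fin (2 * m)) :=
  SimpleGraph.fromRel (fun u v =>
    ((u : ℕ) < m ∧ (v : ℕ) < m ∧ I1 = true) ∨
    (m ≤ (u : ℕ) ∧ m ≤ (v : ℕ) ∧ I4 = true) ∨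
    ((u : ℕ) < m ∧ m ≤ (v : ℕ) ∧
      (((u : ℕ) < (v : ℕ) - m ∧ I2 = true) ∨
       ((v : ℕ) - m < (u : ℕ) ∧ I3 = true) ∨
       ((u : ℕ) = (v : ℕ) - m ∧ Even (u : ℕ)))))

/-- The ordered graph `M^>_I(X,Y)`: as `M^<_I(X,Y)` but with the `y`-indices reversed,
i.e. vertex `m + p` plays the role of `y_{m-p}` (so that `y_1 > y_2 > … > y_m`). -/
def Mgt (m : ℕ) (I1 I2 I3 I4 : Bool) : SimpleGraph (Fin (2 * m)) :=
  SimpleGraph.fromRel (fun u v =>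
    ((u : ℕ) < m ∧ (v : ℕ) < m ∧ I1 = true) ∨
    (m ≤ (u : ℕ) ∧ m ≤ (v : ℕ) ∧ I4 = true) ∨
    ((u : ℕ) < m ∧ m ≤ (v : ℕ) ∧
      (((u : ℕ) < 2 * m - 1 - (v : ℕ) ∧ I2 = true) ∨
       (2 * m - 1 - (v : ℕ) < (u : ℕ) ∧ I3 = true) ∨
       ((u : ℕ) = 2 * m - 1 - (v : ℕ) ∧ Even (u : ℕ)))))

/-- `B` is a set of consecutive vertices which is pairwise 1-homogeneous. -/
def IsHomInterval {N : ℕ} (G : SimpleGraph (Fin N)) (B : Set (Fin N)) : Prop :=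
  (∀ x y z : Fin N, x ∈ B → z ∈ B → x ≤ y → y ≤ z → y ∈ B) ∧
  (∀ x ∈ B, ∀ y ∈ B, lHom G 1 x y)

/-- A homogeneous block of `G`: a maximal 1-homogeneous set of consecutive vertices. -/
def IsHomBlock {N : ℕ} (G : SimpleGraph (Fin N)) (B : Set (Fin N)) : Prop :=
  B.Nonempty ∧ IsHomInterval G B ∧ ∀ B' : Set (Fin N), B ⊆ B' → IsHomInterval G B' → B = B'

/-- `G` has at most `k` homogeneous blocks. -/
def HomBlocksLE {N : ℕ} (G : SimpleGraph (Fin N)) (k : ℕ) : Prop :=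
  {B : Set (Fin N) | IsHomBlock G B}.ncard ≤ k

/-- `TailBound G k M` : the homogeneous block sequence `t_1 ≥ t_2 ≥ …` of `G` satisfies
`Σ_{i=k+2}^∞ t_i ≤ M`, i.e. some (equivalently, the largest) `k+1` homogeneous blocks
cover all but at most `M` vertices. -/
def TailBound {N : ℕ} (G : SimpleGraph (Fin N)) (k M : ℕ) : Prop :=
  ∃ S : Finset (Set (Fin N)), S.card ≤ k + 1 ∧ (∀ B ∈ S, IsHomBlock G B) ∧
    {v : Fin N | ∀ B ∈ S, v ∉ B}.ncard ≤ M

/-- An ordered graph is irreducible if no pair of vertices `u < v` separates its edges. -/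
def IrredGraph {N : ℕ} (G : SimpleGraph (Fin N)) : Prop :=
  ¬ ∃ u v : Fin N, u < v ∧
      ∀ i j : Fin N, i < j → G.Adj i j → ((j : ℕ) ≤ (u : ℕ) ∨ (v : ℕ) ≤ (i : ℕ))

/-- `G` is `ℓ`-empty: it has no edges of length at least `ℓ`. -/
def lEmpty {N : ℕ} (G : SimpleGraph (Fin N)) (ℓ : ℕ) : Prop :=
  ∀ u v : Fin N, G.Adj u v → ((u : ℤ) - (v : ℤ)).natAbs < ℓ

/-- `IsFamSum G sz Gs` : `G = G_1 + … + G_s`, the consecutive sum of the ordered graphs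
`Gs 0, …, Gs (s-1)` (of orders `sz 0, …, sz (s-1)`), with no edges between summands. -/
def IsFamSum {N s : ℕ} (G : SimpleGraph (Fin N)) (sz : Fin s → ℕ)
    (Gs : ∀ i, SimpleGraph (Fin (sz i))) : Prop :=
  N = ∑ i, sz i ∧
  ∀ u v : Fin N, G.Adj u v ↔ ∃ (i : Fin s) (x y : Fin (sz i)),
    (Gs i).Adj x y ∧
    (u : ℕ) = (∑ j ∈ Finset.univ.filter (fun j => j < i), sz j) + (x : ℕ) ∧
    (v : ℕ) = (∑ j ∈ Finset.univ.filter (fun j => j < i), sz j) + (y : ℕ)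

/-- `(Gs 0, …, Gs (s-1))` is the irreducible block decomposition of `G`:
`G = G_1 + ⋯ + G_s` with every block nonempty and irreducible.  (Such a
decomposition is unique.) -/
def IsIrredDecomp {N s : ℕ} (G : SimpleGraph (Fin N)) (sz : Fin s → ℕ)
    (Gs : ∀ i, SimpleGraph (Fin (sz i))) : Prop :=
  IsFamSum G sz Gs ∧ (∀ i, 1 ≤ sz i) ∧ ∀ i, IrredGraph (Gs i)

/-- `J_1^{(n)} = K_n`. -/
def Jgraph1 (n : ℕ) : SimpleGraph (Fin n) := ⊤

/-- `J_2^{(n)}` : single edge `{1,n}`. -/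
def Jgraph2 (n : ℕ) : SimpleGraph (Fin n) :=
  SimpleGraph.fromRel (fun u v => (u : ℕ) = 0 ∧ (v : ℕ) = n - 1)

/-- `J_3^{(n)}` : star at the first vertex. -/
def Jgraph3 (n : ℕ) : SimpleGraph (Fin n) :=
  SimpleGraph.fromRel (fun u _ => (u : ℕ) = 0)

/-- `J_4^{(n)}` : star at the last vertex. -/
def Jgraph4 (n : ℕ) : SimpleGraph (Fin n) :=
  SimpleGraph.fromRel (fun _ v => (v : ℕ) = n - 1)

/-- `L^{(n)}` : the monotone path. -/
def Lgraph (n : ℕ) : SimpleGraph (Fin n) :=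
  SimpleGraph.fromRel (fun u v => (v : ℕ) = (u : ℕ) + 1)

/-- `Q_1` : edge set `{13, 24}` on `[4]`. -/
def Qgraph1 : SimpleGraph (Fin 4) :=
  SimpleGraph.fromRel (fun u v => ((u : ℕ) = 0 ∧ (v : ℕ) = 2) ∨ ((u : ℕ) = 1 ∧ (v : ℕ) = 3))

/-- `Q_2` : edge set `{14, 23}` on `[4]`. -/
def Qgraph2 : SimpleGraph (Fin 4) :=
  SimpleGraph.fromRel (fun u v => ((u : ℕ) = 0 ∧ (v : ℕ) = 3) ∨ ((u : ℕ) = 1 ∧ (v : ℕ) = 2))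

/-- `G` is order-isomorphic to a member of the family `𝒥`. -/
def InJ {n : ℕ} (G : SimpleGraph (Fin n)) : Prop :=
  G = Jgraph1 n ∨ G = Jgraph2 n ∨ G = Jgraph3 n ∨ G = Jgraph4 n ∨ G = Lgraph n ∨
  (n = 4 ∧ IndSub G Qgraph1) ∨ (n = 4 ∧ IndSub G Qgraph2)

/-- `G` is order-isomorphic to a member of `𝒥_ℓ`. -/
def InJle (ℓ : ℕ) {n : ℕ} (G : SimpleGraph (Fin n)) : Prop :=
  (n ≤ ℓ ∧ (G = Jgraph1 n ∨ G = Jgraph2 n ∨ G = Jgraph3 n ∨ G = Jgraph4 n ∨ G = Lgraph n)) ∨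
  (4 ≤ ℓ ∧ n = 4 ∧ (IndSub G Qgraph1 ∨ IndSub G Qgraph2))

/-- `A` is a sum `B_1 + ⋯ + B_t` of members of `𝒥_ℓ` which are pairwise comparable in
the induced ordered subgraph order. -/
def InJA (ℓ : ℕ) {n : ℕ} (A : SimpleGraph (Fin n)) : Prop :=
  ∃ (t : ℕ) (sz : Fin t → ℕ) (Bs : ∀ j, SimpleGraph (Fin (sz j))),
    IsFamSum A sz Bs ∧ (∀ j, InJle ℓ (Bs j)) ∧
    ∀ j j', IndSub (Bs j) (Bs j') ∨ IndSub (Bs j') (Bs j)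

/-- `G ∈ 𝒥(k,ℓ)`. -/
def InJkl (k ℓ : ℕ) {n : ℕ} (G : SimpleGraph (Fin n)) : Prop :=
  ∃ (s : ℕ) (sz : Fin s → ℕ) (As : ∀ i, SimpleGraph (Fin (sz i))),
    s ≤ k ∧ IsFamSum G sz As ∧ ∀ i, InJA ℓ (As i)

set_option maxHeartbeats 1000000

lemma irred_gap {N : ℕ} {G : SimpleGraph (Fin N)} (hG : IrredGraph G) (x : ℕ) (hx : x + 1 < N) :
    ∃ i j : Fin N, G.Adj i j ∧ (i : ℕ) ≤ x ∧ x < (j : ℕ) := by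
  by_contra hc
  push_neg at hc
  apply hG
  refine ⟨⟨x, by omega⟩, ⟨x+1, by omega⟩, by simp [Fin.lt_def], ?_⟩
  intro i j hij hadj
  have := hc i j hadj
  simp only [Fin.lt_def] at hij
  show (j : ℕ) ≤ x ∨ x + 1 ≤ (i : ℕ)
  omega

def triG {N : ℕ} (G : SimpleGraph (Fin N)) (a b c : Fin N) : SimpleGraph (Fin 3) :=
  G.comap ![a, b, c]

lemma triG_sub {N : ℕ} (G : SimpleGraph (Fin N)) {a b c : Fin N} (hab : a < b) (hbc : b < c) :
    IndSub (triG G a b c) G := by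
  have hsm : StrictMono ![a, b, c] := by
    intro i j hij
    fin_cases i <;> fin_cases j <;>
      first
        | exact absurd hij (by decide)
        | exact hab
        | exact hbc
        | exact hab.trans hbc
  exact ⟨OrderEmbedding.ofStrictMono _ hsm, fun i j => Iff.rfl⟩

lemma tri_irred_of (H : SimpleGraph (Fin 3))
    (h : H.Adj 0 2 ∨ (H.Adj 0 1 ∧ H.Adj 1 2)) : IrredGraph H := by
  rintro ⟨u, v, huv, hs⟩
  simp only [Fin.lt_def] at huv
  have hv := v.isLt
  rcases h with h02 | ⟨h01, h12⟩
  · have := hs 0 2 (by decide) h02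
    have : (2:ℕ) ≤ u ∨ (v:ℕ) ≤ 0 := by simpa using this
    omega
  · have t1 := hs 0 1 (by decide) h01
    have t2 := hs 1 2 (by decide) h12
    have t1' : (1:ℕ) ≤ u ∨ (v:ℕ) ≤ 0 := by simpa using t1
    have t2' : (2:ℕ) ≤ u ∨ (v:ℕ) ≤ 1 := by simpa using t2
    omega

def quadG {N : ℕ} (G : SimpleGraph (Fin N)) (a b c d : Fin N) : SimpleGraph (Fin 4) :=
  G.comap ![a, b, c, d]

lemma quadG_sub {N : ℕ} (G : SimpleGraph (Fin N)) {a b c d : Fin N}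
    (hab : a < b) (hbc : b < c) (hcd : c < d) :
    IndSub (quadG G a b c d) G := by
  have hsm : StrictMono ![a, b, c, d] := by
    intro i j hij
    fin_cases i <;> fin_cases j <;>
      first
        | exact absurd hij (by decide)
        | exact hab
        | exact hbc
        | exact hcd
        | exact hab.trans hbc
        | exact hbc.trans hcd
        | exact (hab.trans hbc).trans hcd
  exact ⟨OrderEmbedding.ofStrictMono _ hsm, fun i j => Iff.rfl⟩

lemma quad_irred_of (H : SimpleGraph (Fin 4))
    (h : H.Adj 0 3 ∨ (H.Adj 0 2 ∧ H.Adj 1 3)) : IrredGraph H := by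
  rintro ⟨u, v, huv, hs⟩
  simp only [Fin.lt_def] at huv
  have hv := v.isLt
  rcases h with h03 | ⟨h02, h13⟩
  · have := hs 0 3 (by decide) h03
    have : (3:ℕ) ≤ u ∨ (v:ℕ) ≤ 0 := by simpa using this
    omega
  · have t1 := hs 0 2 (by decide) h02
    have t2 := hs 1 3 (by decide) h13
    have t1' : (2:ℕ) ≤ u ∨ (v:ℕ) ≤ 0 := by simpa using t1
    have t2' : (3:ℕ) ≤ u ∨ (v:ℕ) ≤ 1 := by simpa using t2
    omega

lemma fin_mk_eq {N : ℕ} (i : Fin N) (x : ℕ) (h : x < N) (e : (i:ℕ) = x) : i = ⟨x, h⟩ :=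
  Fin.ext e

lemma adj_iff_of_eq {n : ℕ} {H1 H2 : SimpleGraph (Fin n)} (e : H1 = H2) (i j : Fin n) :
    H1.Adj i j ↔ H2.Adj i j := by rw [e]


/-- **Lemma.**  A finite irreducible ordered graph with at most one irreducible induced
ordered subgraph of order 3 and at most one of order 4 belongs to the family `𝒥`. -/
theorem few_irreducible_subgraphs_in_J (N : ℕ) (G : SimpleGraph (Fin N))
    (hG : IrredGraph G)
    (h3 : ∀ H1 H2 : SimpleGraph (Fin 3), IrredGraph H1 → IndSub H1 G →
        IrredGraph H2 → IndSub H2 G → H1 = H2)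
    (h4 : ∀ H1 H2 : SimpleGraph (Fin 4), IrredGraph H1 → IndSub H1 G →
        IrredGraph H2 → IndSub H2 G → H1 = H2) :
    InJ G := by
  have finlt : ∀ u v : Fin N, (u:ℕ) < (v:ℕ) → u < v := fun u v h => Fin.lt_def.mpr h
  by_cases hlong : ∃ u v : Fin N, (u:ℕ) + 2 ≤ (v:ℕ) ∧ G.Adj u v
  case neg =>
    -- all edges have length 1 : G is the monotone path
    push_neg at hlong
    have short : ∀ u v : Fin N, G.Adj u v → (u:ℕ) < (v:ℕ) → (v:ℕ) = (u:ℕ) + 1 := by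
      intro u v h hlt
      by_contra hne
      exact hlong u v (by omega) h
    have consec : ∀ u v : Fin N, (v:ℕ) = (u:ℕ) + 1 → G.Adj u v := by
      intro u v hv
      obtain ⟨i, j, hij, hi, hj⟩ := irred_gap hG (u:ℕ) (by have := v.isLt; omega)
      have hj1 := short i j hij (by omega)
      have ei : i = u := Fin.ext (by omega)
      have ej : j = v := Fin.ext (by omega)
      exact ei ▸ ej ▸ hij
    refine Or.inr (Or.inr (Or.inr (Or.inr (Or.inl ?_))))
    ext u v
    simp only [Lgraph, SimpleGraph.fromRel_adj]
    constructor
    · intro h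
      refine ⟨G.ne_of_adj h, ?_⟩
      have hnev : (u:ℕ) ≠ (v:ℕ) := fun e => G.ne_of_adj h (Fin.ext e)
      rcases Nat.lt_or_ge (u:ℕ) (v:ℕ) with hlt | hge
      · exact Or.inl (short u v h hlt)
      · exact Or.inr (short v u h.symm (by omega))
    · rintro ⟨hne, h | h⟩
      · exact consec u v h
      · exact (consec v u h).symm
  case pos =>
    obtain ⟨a, b, hab2, hAB⟩ := hlong
    have hbN := b.isLt
    have haN := a.isLt
    have hN3 : 3 ≤ N := by omega
    obtain ⟨a1, ha1v⟩ : ∃ a1 : Fin N, (a1:ℕ) = (a:ℕ) + 1 := ⟨⟨(a:ℕ)+1, by omega⟩, rfl⟩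
    have hab : a < b := finlt a b (by omega)
    have haa1 : a < a1 := finlt a a1 (by omega)
    have ha1b : a1 < b := finlt a1 b (by omega)
    have irrRef : IrredGraph (triG G a a1 b) := tri_irred_of _ (Or.inl hAB)
    have key3 : ∀ x y z : Fin N, x < y → y < z → IrredGraph (triG G x y z) →
        ((G.Adj x y ↔ G.Adj a a1) ∧ (G.Adj x z ↔ G.Adj a b) ∧ (G.Adj y z ↔ G.Adj a1 b)) := by
      intro x y z hxy hyz hirr
      have e := h3 _ _ hirr (triG_sub G hxy hyz) irrRef (triG_sub G haa1 ha1b)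
      exact ⟨adj_iff_of_eq e 0 1, adj_iff_of_eq e 0 2, adj_iff_of_eq e 1 2⟩
    have F1 : ∀ x y z : Fin N, x < y → y < z → G.Adj x z →
        (G.Adj x y ↔ G.Adj a a1) ∧ (G.Adj y z ↔ G.Adj a1 b) := by
      intro x y z h1 h2 h3'
      have k := key3 x y z h1 h2 (tri_irred_of _ (Or.inl h3'))
      exact ⟨k.1, k.2.2⟩
    have F2 : ∀ x y z : Fin N, x < y → y < z → G.Adj x y → G.Adj y z →
        (G.Adj x y ↔ G.Adj a a1) ∧ G.Adj x z ∧ (G.Adj y z ↔ G.Adj a1 b) := by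
      intro x y z h1 h2 hxy hyz
      have k := key3 x y z h1 h2 (tri_irred_of _ (Or.inr ⟨hxy, hyz⟩))
      exact ⟨k.1, k.2.1.mpr hAB, k.2.2⟩
    by_cases R01 : G.Adj a a1 <;> by_cases R12 : G.Adj a1 b
    · -- K3 case : G = Jgraph1
      have consec : ∀ u v : Fin N, (v:ℕ) = (u:ℕ) + 1 → G.Adj u v := by
        intro u v hv
        obtain ⟨i, j, hij, hi, hj⟩ := irred_gap hG (u:ℕ) (by have := v.isLt; omega)
        have hjN := j.isLt
        have hadjuj : G.Adj u j := by
          rcases Nat.lt_or_ge (i:ℕ) (u:ℕ) with hlt | hge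
          · exact (F1 i u j (finlt i u hlt) (finlt u j (by omega)) hij).2.mpr R12
          · have ei : i = u := Fin.ext (by omega)
            exact ei ▸ hij
        rcases Nat.lt_or_ge (v:ℕ) (j:ℕ) with hlt | hge
        · exact (F1 u v j (finlt u v (by omega)) (finlt v j hlt) hadjuj).1.mpr R01
        · have ej : j = v := Fin.ext (by omega)
          exact ej ▸ hadjuj
      have allAdj : ∀ d : ℕ, ∀ u v : Fin N, (v:ℕ) = (u:ℕ) + d + 1 → G.Adj u v := by
        intro d
        induction d with
        | zero => exact fun u v hv => consec u v hv
        | succ d ih =>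
          intro u v hv
          have hvN := v.isLt
          obtain ⟨w, hw⟩ : ∃ w : Fin N, (w:ℕ) = (u:ℕ) + 1 := ⟨⟨(u:ℕ)+1, by omega⟩, rfl⟩
          have h1 : G.Adj u w := consec u w hw
          have h2 : G.Adj w v := ih w v (by omega)
          exact (F2 u w v (finlt u w (by omega)) (finlt w v (by omega)) h1 h2).2.1
      refine Or.inl ?_
      ext u v
      simp only [Jgraph1, SimpleGraph.top_adj]
      constructor
      · exact fun h => G.ne_of_adj h
      · intro hne
        have hnev : (u:ℕ) ≠ (v:ℕ) := fun e => hne (Fin.ext e)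
        rcases Nat.lt_or_ge (u:ℕ) (v:ℕ) with hlt | hge
        · exact allAdj ((v:ℕ) - (u:ℕ) - 1) u v (by omega)
        · exact (allAdj ((u:ℕ) - (v:ℕ) - 1) v u (by omega)).symm
    · -- J3 case : G = Jgraph3
      have noedge_r : ∀ u v : Fin N, u < v → G.Adj u v → (u:ℕ) = 0 := by
        intro u v huv hadj
        by_contra h0
        have hvN := v.isLt
        have huv' : (u:ℕ) < (v:ℕ) := Fin.lt_def.mp huv
        obtain ⟨i, j, hij, hi, hj⟩ := irred_gap hG ((u:ℕ)-1) (by omega)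
        have hjN := j.isLt
        have hadjiu : G.Adj i u := by
          rcases Nat.lt_or_ge (u:ℕ) (j:ℕ) with hlt | hge
          · exact (F1 i u j (finlt i u (by omega)) (finlt u j hlt) hij).1.mpr R01
          · have ej : j = u := Fin.ext (by omega)
            exact ej ▸ hij
        exact R12 ((F2 i u v (finlt i u (by omega)) huv hadjiu hadj).2.2.mp hadj)
      have star : ∀ z v : Fin N, (z:ℕ) = 0 → 1 ≤ (v:ℕ) → G.Adj z v := by
        intro z v hz0 hv1
        have hvN := v.isLt
        obtain ⟨i, j, hij, hi, hj⟩ := irred_gap hG ((v:ℕ)-1) (by omega)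
        have hjN := j.isLt
        have hi0 : (i:ℕ) = 0 := noedge_r i j (finlt i j (by omega)) hij
        have ei : i = z := Fin.ext (by omega)
        rcases Nat.lt_or_ge (v:ℕ) (j:ℕ) with hlt | hge
        · exact (F1 z v j (finlt z v (by omega)) (finlt v j hlt) (ei ▸ hij)).1.mpr R01
        · have ej : j = v := Fin.ext (by omega)
          exact ei ▸ ej ▸ hij
      refine Or.inr (Or.inr (Or.inl ?_))
      ext u v
      simp only [Jgraph3, SimpleGraph.fromRel_adj]
      constructor
      · intro h
        refine ⟨G.ne_of_adj h, ?_⟩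
        have hnev : (u:ℕ) ≠ (v:ℕ) := fun e => G.ne_of_adj h (Fin.ext e)
        rcases Nat.lt_or_ge (u:ℕ) (v:ℕ) with hlt | hge
        · exact Or.inl (noedge_r u v (finlt u v hlt) h)
        · exact Or.inr (noedge_r v u (finlt v u (by omega)) h.symm)
      · rintro ⟨hne, h0 | h0⟩
        · have hnev : (u:ℕ) ≠ (v:ℕ) := fun e => hne (Fin.ext e)
          exact star u v h0 (by omega)
        · have hnev : (u:ℕ) ≠ (v:ℕ) := fun e => hne (Fin.ext e)
          exact (star v u h0 (by omega)).symm
    · -- J4 case : G = Jgraph4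
      have noedge_l : ∀ u v : Fin N, u < v → G.Adj u v → (v:ℕ) = N - 1 := by
        intro u v huv hadj
        by_contra h0
        have hvN := v.isLt
        have huv' : (u:ℕ) < (v:ℕ) := Fin.lt_def.mp huv
        obtain ⟨i, j, hij, hi, hj⟩ := irred_gap hG (v:ℕ) (by omega)
        have hjN := j.isLt
        have hadjvj : G.Adj v j := by
          rcases Nat.lt_or_ge (i:ℕ) (v:ℕ) with hlt | hge
          · exact (F1 i v j (finlt i v hlt) (finlt v j (by omega)) hij).2.mpr R12
          · have ei : i = v := Fin.ext (by omega)
            exact ei ▸ hij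
        exact R01 ((F2 u v j huv (finlt v j (by omega)) hadj hadjvj).1.mp hadj)
      have star' : ∀ u w : Fin N, (w:ℕ) = N - 1 → (u:ℕ) < N - 1 → G.Adj u w := by
        intro u w hwv hu1
        obtain ⟨i, j, hij, hi, hj⟩ := irred_gap hG (u:ℕ) (by omega)
        have hjN := j.isLt
        have hjV : (j:ℕ) = N - 1 := noedge_l i j (finlt i j (by omega)) hij
        have ej : j = w := Fin.ext (by omega)
        rcases Nat.lt_or_ge (i:ℕ) (u:ℕ) with hlt | hge
        · exact (F1 i u w (finlt i u hlt) (finlt u w (by omega)) (ej ▸ hij)).2.mpr R12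
        · have ei : i = u := Fin.ext (by omega)
          exact ei ▸ ej ▸ hij
      refine Or.inr (Or.inr (Or.inr (Or.inl ?_)))
      ext u v
      simp only [Jgraph4, SimpleGraph.fromRel_adj]
      constructor
      · intro h
        refine ⟨G.ne_of_adj h, ?_⟩
        have hnev : (u:ℕ) ≠ (v:ℕ) := fun e => G.ne_of_adj h (Fin.ext e)
        rcases Nat.lt_or_ge (u:ℕ) (v:ℕ) with hlt | hge
        · exact Or.inl (noedge_l u v (finlt u v hlt) h)
        · exact Or.inr (noedge_l v u (finlt v u (by omega)) h.symm)
      · rintro ⟨hne, h0 | h0⟩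
        · have hnev : (u:ℕ) ≠ (v:ℕ) := fun e => hne (Fin.ext e)
          have huN := u.isLt
          exact star' u v h0 (by omega)
        · have hnev : (u:ℕ) ≠ (v:ℕ) := fun e => hne (Fin.ext e)
          have hvN := v.isLt
          exact (star' v u h0 (by omega)).symm
    · -- J2 / Q case
      have F1' : ∀ x y z : Fin N, x < y → y < z → G.Adj x z → ¬G.Adj x y ∧ ¬G.Adj y z :=
        fun x y z h1 h2 h3' =>
          ⟨fun h => R01 ((F1 x y z h1 h2 h3').1.mp h),
           fun h => R12 ((F1 x y z h1 h2 h3').2.mp h)⟩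
      have F2' : ∀ x y z : Fin N, x < y → y < z → G.Adj x y → G.Adj y z → False :=
        fun x y z h1 h2 hxy hyz => R01 ((F2 x y z h1 h2 hxy hyz).1.mp hxy)
      have M' : ∀ p q r s : Fin N, p < q → r < s → G.Adj p q → G.Adj r s →
          (p = r ∨ p = s ∨ q = r ∨ q = s) → p = r ∧ q = s := by
        intro p q r s h1 h2 e1 e2 hsh
        rcases hsh with h | h | h | h
        · subst h
          refine ⟨rfl, ?_⟩
          rcases lt_trichotomy q s with hq | hq | hq
          · exact absurd e1 (F1' p q s h1 hq e2).1
          · exact hq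
          · exact absurd e2 (F1' p s q h2 hq e1).1
        · subst h
          exact (F2' r p q h2 h1 e2 e1).elim
        · subst h
          exact (F2' p q s h1 h2 e1 e2).elim
        · subst h
          refine ⟨?_, rfl⟩
          rcases lt_trichotomy p r with hp | hp | hp
          · exact absurd e2 (F1' p r q hp h2 e1).2
          · exact hp
          · exact absurd e1 (F1' r p q hp h1 e2).2
      by_cases hone : ∀ c d : Fin N, c < d → G.Adj c d → c = a ∧ d = b
      · -- single edge : G = Jgraph2
        have ha0 : (a:ℕ) = 0 := by
          obtain ⟨i, j, hij, hi, hj⟩ := irred_gap hG 0 (by omega)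
          have e := (hone i j (finlt i j (by omega)) hij).1
          have hv : (i:ℕ) = (a:ℕ) := congrArg Fin.val e
          omega
        have hbend : (b:ℕ) = N - 1 := by
          obtain ⟨i, j, hij, hi, hj⟩ := irred_gap hG (N-2) (by omega)
          have hjN := j.isLt
          have e := (hone i j (finlt i j (by omega)) hij).2
          have hv : (j:ℕ) = (b:ℕ) := congrArg Fin.val e
          omega
        refine Or.inr (Or.inl ?_)
        ext u v
        simp only [Jgraph2, SimpleGraph.fromRel_adj]
        constructor
        · intro h
          refine ⟨G.ne_of_adj h, ?_⟩
          have hnev : (u:ℕ) ≠ (v:ℕ) := fun e => G.ne_of_adj h (Fin.ext e)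
          rcases Nat.lt_or_ge (u:ℕ) (v:ℕ) with hlt | hge
          · obtain ⟨eu, ev⟩ := hone u v (finlt u v hlt) h
            exact Or.inl ⟨(congrArg Fin.val eu).trans ha0, (congrArg Fin.val ev).trans hbend⟩
          · obtain ⟨ev, eu⟩ := hone v u (finlt v u (by omega)) h.symm
            exact Or.inr ⟨(congrArg Fin.val ev).trans ha0, (congrArg Fin.val eu).trans hbend⟩
        · rintro ⟨hne, ⟨h1, h2⟩ | ⟨h1, h2⟩⟩
          · have eu : a = u := Fin.ext (by omega)
            have ev : b = v := Fin.ext (by omega)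
            exact eu ▸ ev ▸ hAB
          · have ev : a = v := Fin.ext (by omega)
            have eu : b = u := Fin.ext (by omega)
            exact ev ▸ eu ▸ hAB.symm
      · -- at least two edges : G is Q1 or Q2
        push_neg at hone
        obtain ⟨c, d, hcd, hCD, hne2⟩ := hone
        have hdN := d.isLt
        have hcdv : (c:ℕ) < (d:ℕ) := Fin.lt_def.mp hcd
        have hndj : ¬(c = a ∨ c = b ∨ d = a ∨ d = b) := by
          intro hsh
          have hh := M' c d a b hcd hab hCD hAB hsh
          exact hne2 hh.1 hh.2
        have hcav : (c:ℕ) ≠ (a:ℕ) := fun e => hndj (Or.inl (Fin.ext e))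
        have hcbv : (c:ℕ) ≠ (b:ℕ) := fun e => hndj (Or.inr (Or.inl (Fin.ext e)))
        have hdav : (d:ℕ) ≠ (a:ℕ) := fun e => hndj (Or.inr (Or.inr (Or.inl (Fin.ext e))))
        have hdbv : (d:ℕ) ≠ (b:ℕ) := fun e => hndj (Or.inr (Or.inr (Or.inr (Fin.ext e))))
        have qpair : ∃ p q r s : Fin N, p < q ∧ q < r ∧ r < s ∧
            ((G.Adj p r ∧ G.Adj q s) ∨ (G.Adj p s ∧ G.Adj q r)) := by
          have seqc : ∀ x y : Fin N, x < y → G.Adj x y → ((y:ℕ) + 1 < N) →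
              ∃ p q r s : Fin N, p < q ∧ q < r ∧ r < s ∧
                ((G.Adj p r ∧ G.Adj q s) ∨ (G.Adj p s ∧ G.Adj q r)) := by
            intro x y hxy hXY hyN
            obtain ⟨i, j, hij, hi, hj⟩ := irred_gap hG (y:ℕ) hyN
            have hxyv := Fin.lt_def.mp hxy
            have hijlt : i < j := finlt i j (by omega)
            have hne3 : ¬(i = x ∨ i = y ∨ j = x ∨ j = y) := by
              intro hsh
              have hh := M' i j x y hijlt hxy hij hXY hsh
              have := congrArg Fin.val hh.2
              omega
            have hix : (i:ℕ) ≠ (x:ℕ) := fun e => hne3 (Or.inl (Fin.ext e))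
            have hiy : (i:ℕ) ≠ (y:ℕ) := fun e => hne3 (Or.inr (Or.inl (Fin.ext e)))
            rcases Nat.lt_or_ge (i:ℕ) (x:ℕ) with hlt | hge
            · exact ⟨i, x, y, j, finlt _ _ hlt, hxy, finlt _ _ hj, Or.inr ⟨hij, hXY⟩⟩
            · exact ⟨x, i, y, j, finlt _ _ (by omega), finlt _ _ (by omega),
                finlt _ _ hj, Or.inl ⟨hXY, hij⟩⟩
          rcases Nat.lt_or_ge (b:ℕ) (c:ℕ) with h1 | h1
          · exact seqc a b hab hAB (by omega)
          rcases Nat.lt_or_ge (d:ℕ) (a:ℕ) with h2 | h2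
          · exact seqc c d hcd hCD (by omega)
          rcases Nat.lt_or_ge (c:ℕ) (a:ℕ) with h3 | h3
          · rcases Nat.lt_or_ge (d:ℕ) (b:ℕ) with h4 | h4
            · exact ⟨c, a, d, b, finlt _ _ h3, finlt _ _ (by omega), finlt _ _ h4,
                Or.inl ⟨hCD, hAB⟩⟩
            · exact ⟨c, a, b, d, finlt _ _ h3, hab, finlt _ _ (by omega),
                Or.inr ⟨hCD, hAB⟩⟩
          · rcases Nat.lt_or_ge (d:ℕ) (b:ℕ) with h4 | h4
            · exact ⟨a, c, d, b, finlt _ _ (by omega), hcd, finlt _ _ h4,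
                Or.inr ⟨hAB, hCD⟩⟩
            · exact ⟨a, c, b, d, finlt _ _ (by omega), finlt _ _ (by omega),
                finlt _ _ (by omega), Or.inl ⟨hAB, hCD⟩⟩
        obtain ⟨p, q, r, s, hpq, hqr, hrs, hQ⟩ := qpair
        have hpqv : (p:ℕ) < (q:ℕ) := Fin.lt_def.mp hpq
        have hqrv : (q:ℕ) < (r:ℕ) := Fin.lt_def.mp hqr
        have hrsv : (r:ℕ) < (s:ℕ) := Fin.lt_def.mp hrs
        have hsN' := s.isLt
        rcases hQ with ⟨hpr, hqs⟩ | ⟨hps, hqr2⟩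
        · -- crossing : Q1
          have n01 : ¬G.Adj p q := (F1' p q r hpq hqr hpr).1
          have n12 : ¬G.Adj q r := (F1' p q r hpq hqr hpr).2
          have n23 : ¬G.Adj r s := (F1' q r s hqr hrs hqs).2
          have n03 : ¬G.Adj p s := by
            intro h
            have hh := M' p r p s (hpq.trans hqr) (finlt p s (by omega)) hpr h (Or.inl rfl)
            have := congrArg Fin.val hh.2
            omega
          have irrQ : IrredGraph (quadG G p q r s) := quad_irred_of _ (Or.inr ⟨hpr, hqs⟩)
          have subQ : IndSub (quadG G p q r s) G := quadG_sub G hpq hqr hrs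
          have aux : ∀ u w : Fin N, (u:ℕ) + 3 ≤ (w:ℕ) → ¬G.Adj u w := by
            intro u w h3w hadj
            have hwN := w.isLt
            obtain ⟨v1, hv1⟩ : ∃ v1 : Fin N, (v1:ℕ) = (u:ℕ)+1 := ⟨⟨_, by omega⟩, rfl⟩
            obtain ⟨v2, hv2⟩ : ∃ v2 : Fin N, (v2:ℕ) = (u:ℕ)+2 := ⟨⟨_, by omega⟩, rfl⟩
            have irr2 : IrredGraph (quadG G u v1 v2 w) := quad_irred_of _ (Or.inl hadj)
            have e := h4 _ _ irrQ subQ irr2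
              (quadG_sub G (finlt _ _ (by omega)) (finlt _ _ (by omega)) (finlt _ _ (by omega)))
            have h02 : G.Adj u v2 := (adj_iff_of_eq e 0 2).mp hpr
            exact (F1' u v2 w (finlt _ _ (by omega)) (finlt _ _ (by omega)) hadj).1 h02
          have hrv : (r:ℕ) = (p:ℕ) + 2 := by
            by_contra h
            exact aux p r (by omega) hpr
          have hq1 : (q:ℕ) = (p:ℕ) + 1 := by omega
          have hs3 : (s:ℕ) = (p:ℕ) + 3 := by
            by_contra h
            exact aux q s (by omega) hqs
          have hp0 : (p:ℕ) = 0 := by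
            by_contra h0
            obtain ⟨i, j, hij, hi, hj⟩ := irred_gap hG ((p:ℕ)-1) (by omega)
            have hjN := j.isLt
            have hlen : (j:ℕ) < (i:ℕ) + 3 := by
              by_contra hl
              exact aux i j (by omega) hij
            have hijlt : i < j := finlt i j (by omega)
            rcases Nat.lt_or_ge (j:ℕ) ((p:ℕ)+1) with hc | hc
            · have ej : j = p := Fin.ext (by omega)
              have hh := M' i j p r hijlt (hpq.trans hqr) hij hpr (Or.inr (Or.inr (Or.inl ej)))
              have := congrArg Fin.val hh.1
              omega
            · have ej : j = q := Fin.ext (by omega)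
              have hh := M' i j q s hijlt (hqr.trans hrs) hij hqs (Or.inr (Or.inr (Or.inl ej)))
              have := congrArg Fin.val hh.1
              omega
          have hsN : (s:ℕ) = N - 1 := by
            by_contra h0
            obtain ⟨i, j, hij, hi, hj⟩ := irred_gap hG (s:ℕ) (by omega)
            have hjN := j.isLt
            have hlen : (j:ℕ) < (i:ℕ) + 3 := by
              by_contra hl
              exact aux i j (by omega) hij
            have hijlt : i < j := finlt i j (by omega)
            rcases Nat.lt_or_ge (i:ℕ) (s:ℕ) with hc | hc
            · have ei : i = r := Fin.ext (by omega)
              have hh := M' p r i j (hpq.trans hqr) hijlt hpr hij (Or.inr (Or.inr (Or.inl ei.symm)))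
              have := congrArg Fin.val hh.2
              omega
            · have ei : i = s := Fin.ext (by omega)
              have hh := M' q s i j (hqr.trans hrs) hijlt hqs hij (Or.inr (Or.inr (Or.inl ei.symm)))
              have := congrArg Fin.val hh.2
              omega
          have hq1' : (q:ℕ) = 1 := by omega
          have hr2 : (r:ℕ) = 2 := by omega
          have hs3' : (s:ℕ) = 3 := by omega
          have hN4 : N = 4 := by omega
          subst hN4
          refine Or.inr (Or.inr (Or.inr (Or.inr (Or.inr (Or.inl ⟨rfl, ?_⟩)))))
          have adjval : ∀ x y : Fin 4, (x:ℕ) < (y:ℕ) → G.Adj x y →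
              ((x:ℕ) = 0 ∧ (y:ℕ) = 2) ∨ ((x:ℕ) = 1 ∧ (y:ℕ) = 3) := by
            intro x y hlt h
            have hxv := x.isLt
            have hyv := y.isLt
            have e01 : ¬((x:ℕ) = 0 ∧ (y:ℕ) = 1) := by
              rintro ⟨e1, e2⟩
              have ex : p = x := Fin.ext (by omega)
              have ey : q = y := Fin.ext (by omega)
              exact n01 (ex ▸ ey ▸ h.symm).symm
            have e03 : ¬((x:ℕ) = 0 ∧ (y:ℕ) = 3) := by
              rintro ⟨e1, e2⟩
              have ex : p = x := Fin.ext (by omega)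
              have ey : s = y := Fin.ext (by omega)
              exact n03 (ex ▸ ey ▸ h.symm).symm
            have e12 : ¬((x:ℕ) = 1 ∧ (y:ℕ) = 2) := by
              rintro ⟨e1, e2⟩
              have ex : q = x := Fin.ext (by omega)
              have ey : r = y := Fin.ext (by omega)
              exact n12 (ex ▸ ey ▸ h.symm).symm
            have e23 : ¬((x:ℕ) = 2 ∧ (y:ℕ) = 3) := by
              rintro ⟨e1, e2⟩
              have ex : r = x := Fin.ext (by omega)
              have ey : s = y := Fin.ext (by omega)
              exact n23 (ex ▸ ey ▸ h.symm).symm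
            omega
          refine ⟨OrderEmbedding.ofStrictMono id strictMono_id, ?_⟩
          intro i j
          show G.Adj i j ↔ Qgraph1.Adj i j
          simp only [Qgraph1, SimpleGraph.fromRel_adj]
          constructor
          · intro h
            refine ⟨G.ne_of_adj h, ?_⟩
            rcases Nat.lt_or_ge (i:ℕ) (j:ℕ) with hlt | hge
            · rcases adjval i j hlt h with ⟨e1, e2⟩ | ⟨e1, e2⟩
              · exact Or.inl (Or.inl ⟨e1, e2⟩)
              · exact Or.inl (Or.inr ⟨e1, e2⟩)
            · have hnev : (i:ℕ) ≠ (j:ℕ) := fun e => G.ne_of_adj h (Fin.ext e)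
              rcases adjval j i (by omega) h.symm with ⟨e1, e2⟩ | ⟨e1, e2⟩
              · exact Or.inr (Or.inl ⟨e1, e2⟩)
              · exact Or.inr (Or.inr ⟨e1, e2⟩)
          · rintro ⟨hne, (⟨e1, e2⟩ | ⟨e1, e2⟩) | (⟨e1, e2⟩ | ⟨e1, e2⟩)⟩
            · have ex : p = i := Fin.ext (by omega)
              have ey : r = j := Fin.ext (by omega)
              exact ex ▸ ey ▸ hpr
            · have ex : q = i := Fin.ext (by omega)
              have ey : s = j := Fin.ext (by omega)
              exact ex ▸ ey ▸ hqs
            · have ex : p = j := Fin.ext (by omega)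
              have ey : r = i := Fin.ext (by omega)
              exact (ex ▸ ey ▸ hpr : G.Adj j i).symm
            · have ex : q = j := Fin.ext (by omega)
              have ey : s = i := Fin.ext (by omega)
              exact (ex ▸ ey ▸ hqs : G.Adj j i).symm
        · -- nested : Q2
          have n01 : ¬G.Adj p q := (F1' p q s hpq (hqr.trans hrs) hps).1
          have n13 : ¬G.Adj q s := (F1' p q s hpq (hqr.trans hrs) hps).2
          have n02 : ¬G.Adj p r := (F1' p r s (hpq.trans hqr) hrs hps).1
          have n23 : ¬G.Adj r s := (F1' p r s (hpq.trans hqr) hrs hps).2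
          have irrQ : IrredGraph (quadG G p q r s) := quad_irred_of _ (Or.inl hps)
          have subQ : IndSub (quadG G p q r s) G := quadG_sub G hpq hqr hrs
          have aux1 : ∀ u v1 v2 w : Fin N, G.Adj u w → (u:ℕ) < (v1:ℕ) → (v1:ℕ) < (v2:ℕ) →
              (v2:ℕ) < (w:ℕ) → G.Adj v1 v2 := by
            intro u v1 v2 w hadj l1 l2 l3
            have irr2 : IrredGraph (quadG G u v1 v2 w) := quad_irred_of _ (Or.inl hadj)
            have e := h4 _ _ irrQ subQ irr2
              (quadG_sub G (finlt _ _ l1) (finlt _ _ l2) (finlt _ _ l3))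
            exact (adj_iff_of_eq e 1 2).mp hqr2
          have aux2 : ∀ u w : Fin N, (u:ℕ) + 4 ≤ (w:ℕ) → ¬G.Adj u w := by
            intro u w h4w hadj
            have hwN := w.isLt
            obtain ⟨v1, hv1⟩ : ∃ v1 : Fin N, (v1:ℕ) = (u:ℕ)+1 := ⟨⟨_, by omega⟩, rfl⟩
            obtain ⟨v2, hv2⟩ : ∃ v2 : Fin N, (v2:ℕ) = (u:ℕ)+2 := ⟨⟨_, by omega⟩, rfl⟩
            obtain ⟨v3, hv3⟩ : ∃ v3 : Fin N, (v3:ℕ) = (u:ℕ)+3 := ⟨⟨_, by omega⟩, rfl⟩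
            have e12 : G.Adj v1 v2 := aux1 u v1 v2 w hadj (by omega) (by omega) (by omega)
            have e13 : G.Adj v1 v3 := aux1 u v1 v3 w hadj (by omega) (by omega) (by omega)
            have hh := M' v1 v2 v1 v3 (finlt _ _ (by omega)) (finlt _ _ (by omega)) e12 e13
              (Or.inl rfl)
            have := congrArg Fin.val hh.2
            omega
          have hs3 : (s:ℕ) = (p:ℕ) + 3 := by
            by_contra h
            exact aux2 p s (by omega) hps
          have hq1 : (q:ℕ) = (p:ℕ) + 1 := by omega
          have hrv : (r:ℕ) = (p:ℕ) + 2 := by omega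
          have hp0 : (p:ℕ) = 0 := by
            by_contra h0
            obtain ⟨i, j, hij, hi, hj⟩ := irred_gap hG ((p:ℕ)-1) (by omega)
            have hjN := j.isLt
            have hlen : (j:ℕ) < (i:ℕ) + 4 := by
              by_contra hl
              exact aux2 i j (by omega) hij
            have hijlt : i < j := finlt i j (by omega)
            rcases Nat.lt_or_ge (j:ℕ) ((p:ℕ)+1) with hc | hc
            · have ej : j = p := Fin.ext (by omega)
              have hh := M' i j p s hijlt (finlt _ _ (by omega)) hij hps
                (Or.inr (Or.inr (Or.inl ej)))
              have := congrArg Fin.val hh.1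
              omega
            rcases Nat.lt_or_ge (j:ℕ) ((p:ℕ)+2) with hc2 | hc2
            · have ej : j = q := Fin.ext (by omega)
              have hh := M' i j q r hijlt hqr hij hqr2 (Or.inr (Or.inr (Or.inl ej)))
              have := congrArg Fin.val hh.1
              omega
            · have ej : j = r := Fin.ext (by omega)
              have hh := M' i j q r hijlt hqr hij hqr2 (Or.inr (Or.inr (Or.inr ej)))
              have := congrArg Fin.val hh.1
              omega
          have hsN : (s:ℕ) = N - 1 := by
            by_contra h0
            obtain ⟨i, j, hij, hi, hj⟩ := irred_gap hG (s:ℕ) (by omega)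
            have hjN := j.isLt
            have hlen : (j:ℕ) < (i:ℕ) + 4 := by
              by_contra hl
              exact aux2 i j (by omega) hij
            have hijlt : i < j := finlt i j (by omega)
            rcases Nat.lt_or_ge (i:ℕ) ((s:ℕ)-1) with hc | hc
            · have ei : i = q := Fin.ext (by omega)
              have hh := M' q r i j hqr hijlt hqr2 hij (Or.inl ei.symm)
              have := congrArg Fin.val hh.2
              omega
            rcases Nat.lt_or_ge (i:ℕ) (s:ℕ) with hc2 | hc2
            · have ei : i = r := Fin.ext (by omega)
              have hh := M' q r i j hqr hijlt hqr2 hij (Or.inr (Or.inr (Or.inl ei.symm)))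
              have := congrArg Fin.val hh.2
              omega
            · have ei : i = s := Fin.ext (by omega)
              have hh := M' p s i j (finlt _ _ (by omega)) hijlt hps hij
                (Or.inr (Or.inr (Or.inl ei.symm)))
              have := congrArg Fin.val hh.2
              omega
          have hq1' : (q:ℕ) = 1 := by omega
          have hr2 : (r:ℕ) = 2 := by omega
          have hs3' : (s:ℕ) = 3 := by omega
          have hN4 : N = 4 := by omega
          subst hN4
          refine Or.inr (Or.inr (Or.inr (Or.inr (Or.inr (Or.inr ⟨rfl, ?_⟩)))))
          have adjval : ∀ x y : Fin 4, (x:ℕ) < (y:ℕ) → G.Adj x y →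
              ((x:ℕ) = 0 ∧ (y:ℕ) = 3) ∨ ((x:ℕ) = 1 ∧ (y:ℕ) = 2) := by
            intro x y hlt h
            have hxv := x.isLt
            have hyv := y.isLt
            have e01 : ¬((x:ℕ) = 0 ∧ (y:ℕ) = 1) := by
              rintro ⟨e1, e2⟩
              have ex : p = x := Fin.ext (by omega)
              have ey : q = y := Fin.ext (by omega)
              exact n01 (ex ▸ ey ▸ h.symm).symm
            have e02 : ¬((x:ℕ) = 0 ∧ (y:ℕ) = 2) := by
              rintro ⟨e1, e2⟩
              have ex : p = x := Fin.ext (by omega)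
              have ey : r = y := Fin.ext (by omega)
              exact n02 (ex ▸ ey ▸ h.symm).symm
            have e13 : ¬((x:ℕ) = 1 ∧ (y:ℕ) = 3) := by
              rintro ⟨e1, e2⟩
              have ex : q = x := Fin.ext (by omega)
              have ey : s = y := Fin.ext (by omega)
              exact n13 (ex ▸ ey ▸ h.symm).symm
            have e23 : ¬((x:ℕ) = 2 ∧ (y:ℕ) = 3) := by
              rintro ⟨e1, e2⟩
              have ex : r = x := Fin.ext (by omega)
              have ey : s = y := Fin.ext (by omega)
              exact n23 (ex ▸ ey ▸ h.symm).symm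
            omega
          refine ⟨OrderEmbedding.ofStrictMono id strictMono_id, ?_⟩
          intro i j
          show G.Adj i j ↔ Qgraph2.Adj i j
          simp only [Qgraph2, SimpleGraph.fromRel_adj]
          constructor
          · intro h
            refine ⟨G.ne_of_adj h, ?_⟩
            rcases Nat.lt_or_ge (i:ℕ) (j:ℕ) with hlt | hge
            · rcases adjval i j hlt h with ⟨e1, e2⟩ | ⟨e1, e2⟩
              · exact Or.inl (Or.inl ⟨e1, e2⟩)
              · exact Or.inl (Or.inr ⟨e1, e2⟩)
            · have hnev : (i:ℕ) ≠ (j:ℕ) := fun e => G.ne_of_adj h (Fin.ext e)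
              rcases adjval j i (by omega) h.symm with ⟨e1, e2⟩ | ⟨e1, e2⟩
              · exact Or.inr (Or.inl ⟨e1, e2⟩)
              · exact Or.inr (Or.inr ⟨e1, e2⟩)
          · rintro ⟨hne, (⟨e1, e2⟩ | ⟨e1, e2⟩) | (⟨e1, e2⟩ | ⟨e1, e2⟩)⟩
            · have ex : p = i := Fin.ext (by omega)
              have ey : s = j := Fin.ext (by omega)
              exact ex ▸ ey ▸ hps
            · have ex : q = i := Fin.ext (by omega)
              have ey : r = j := Fin.ext (by omega)
              exact ex ▸ ey ▸ hqr2
            · have ex : p = j := Fin.ext (by omega)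
              have ey : s = i := Fin.ext (by omega)
              exact (ex ▸ ey ▸ hps : G.Adj j i).symm
            · have ex : q = j := Fin.ext (by omega)
              have ey : r = i := Fin.ext (by omega)
              exact (ex ▸ ey ▸ hqr2 : G.Adj j i).symm
end

section
/- Let k, m ∈ ℕ and let G be an ordered graph with irreducible block decomposition B(G) = (G_1, …, G_m). If at least k of the blocks G_i are not order-isomorphic to any member of 𝒥, then S_n(G) ≥ 2^{n-1} for every n ≤ k. -/
open Finset

namespace MNJ

/-- Irreducibility ↔ every gap is crossed by an edge. -/
lemma irred_iff_cross {h : ℕ} (G : SimpleGraph (Fin h)) :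
    IrredGraph G ↔ ∀ u : ℕ, u + 1 < h →
      ∃ i j : Fin h, G.Adj i j ∧ (i : ℕ) ≤ u ∧ u < (j : ℕ) := by
  constructor
  · intro hirr u hu
    by_contra hc
    push_neg at hc
    apply hirr
    refine ⟨⟨u, by omega⟩, ⟨u + 1, hu⟩, by simp [Fin.lt_def], ?_⟩
    intro i j hij hadj
    simp only [Fin.le_def]
    rcases le_or_gt (i : ℕ) u with hi | hi
    · left
      have := hc i j hadj hi
      omega
    · right; simpa using hi
  · rintro hcross ⟨u, v, huv, hsep⟩
    have hu : (u : ℕ) + 1 < h := by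
      have := v.isLt
      have : (u : ℕ) < (v : ℕ) := huv
      omega
    obtain ⟨i, j, hadj, hij1, hij2⟩ := hcross (u : ℕ) hu
    have hij : i < j := by simp only [Fin.lt_def]; omega
    rcases hsep i j hij hadj with h1 | h1
    · have : (j : ℕ) ≤ (u : ℕ) := h1
      omega
    · have : (v : ℕ) ≤ (i : ℕ) := h1
      have : (u : ℕ) < (v : ℕ) := huv
      omega

lemma irred_edge {h : ℕ} {G : SimpleGraph (Fin h)} (hirr : IrredGraph G) {u : ℕ}
    (hu : u + 1 < h) : ∃ i j : Fin h, G.Adj i j ∧ (i : ℕ) ≤ u ∧ u < (j : ℕ) :=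
  (irred_iff_cross G).1 hirr u hu

/-! Pattern adjacency characterizations. -/

lemma J1_adj {n : ℕ} (u v : Fin n) : (Jgraph1 n).Adj u v ↔ (u : ℕ) ≠ (v : ℕ) := by
  simp [Jgraph1, Fin.ext_iff, SimpleGraph.top_adj]

lemma J2_adj {n : ℕ} (u v : Fin n) :
    (Jgraph2 n).Adj u v ↔ (((u:ℕ) = 0 ∧ (v:ℕ) = n - 1) ∨ ((v:ℕ) = 0 ∧ (u:ℕ) = n - 1)) ∧ (u:ℕ) ≠ (v:ℕ) := by
  simp only [Jgraph2, SimpleGraph.fromRel_adj, ne_eq, Fin.ext_iff]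
  tauto

lemma J3_adj {n : ℕ} (u v : Fin n) :
    (Jgraph3 n).Adj u v ↔ ((u:ℕ) = 0 ∨ (v:ℕ) = 0) ∧ (u:ℕ) ≠ (v:ℕ) := by
  simp only [Jgraph3, SimpleGraph.fromRel_adj, ne_eq, Fin.ext_iff]
  tauto

lemma J4_adj {n : ℕ} (u v : Fin n) :
    (Jgraph4 n).Adj u v ↔ ((u:ℕ) = n - 1 ∨ (v:ℕ) = n - 1) ∧ (u:ℕ) ≠ (v:ℕ) := by
  simp only [Jgraph4, SimpleGraph.fromRel_adj, ne_eq, Fin.ext_iff]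
  tauto

lemma L_adj {n : ℕ} (u v : Fin n) :
    (Lgraph n).Adj u v ↔ ((v:ℕ) = (u:ℕ) + 1 ∨ (u:ℕ) = (v:ℕ) + 1) := by
  simp only [Lgraph, SimpleGraph.fromRel_adj, ne_eq, Fin.ext_iff]
  omega

lemma Q1_adj (u v : Fin 4) :
    Qgraph1.Adj u v ↔ (((u:ℕ)=0∧(v:ℕ)=2) ∨ ((u:ℕ)=1∧(v:ℕ)=3) ∨ ((u:ℕ)=2∧(v:ℕ)=0) ∨ ((u:ℕ)=3∧(v:ℕ)=1)) := by
  simp only [Qgraph1, SimpleGraph.fromRel_adj, ne_eq, Fin.ext_iff]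
  omega

lemma Q2_adj (u v : Fin 4) :
    Qgraph2.Adj u v ↔ (((u:ℕ)=0∧(v:ℕ)=3) ∨ ((u:ℕ)=1∧(v:ℕ)=2) ∨ ((u:ℕ)=3∧(v:ℕ)=0) ∨ ((u:ℕ)=2∧(v:ℕ)=1)) := by
  simp only [Qgraph2, SimpleGraph.fromRel_adj, ne_eq, Fin.ext_iff]
  omega

/-! Irreducibility of the small patterns. -/

lemma irred_of_cross {h : ℕ} (G : SimpleGraph (Fin h))
    (hc : ∀ u : ℕ, u + 1 < h → ∃ i j : Fin h, G.Adj i j ∧ (i : ℕ) ≤ u ∧ u < (j : ℕ)) :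
    IrredGraph G := (irred_iff_cross G).2 hc


lemma irred_J1_3 : IrredGraph (Jgraph1 3) := by
  apply irred_of_cross
  intro u hu
  exact ⟨⟨0, by omega⟩, ⟨2, by omega⟩, by rw [J1_adj]; simp only [Fin.val_mk]; first | omega | tauto | (simp_all; omega) | simp_all, by simp only [Fin.val_mk]; first | omega | tauto | (simp_all; omega) | simp_all, by simp only [Fin.val_mk]; first | omega | tauto | (simp_all; omega) | simp_all⟩

lemma irred_J2_3 : IrredGraph (Jgraph2 3) := by
  apply irred_of_cross
  intro u hu
  exact ⟨⟨0, by omega⟩, ⟨2, by omega⟩, by rw [J2_adj]; simp only [Fin.val_mk]; first | omega | tauto | (simp_all; omega) | simp_all, by simp only [Fin.val_mk]; first | omega | tauto | (simp_all; omega) | simp_all, by simp only [Fin.val_mk]; first | omega | tauto | (simp_all; omega) | simp_all⟩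

lemma irred_J3_3 : IrredGraph (Jgraph3 3) := by
  apply irred_of_cross
  intro u hu
  exact ⟨⟨0, by omega⟩, ⟨u + 1, by omega⟩, by rw [J3_adj]; simp only [Fin.val_mk]; first | omega | tauto | (simp_all; omega) | simp_all, by simp only [Fin.val_mk]; first | omega | tauto | (simp_all; omega) | simp_all, by simp only [Fin.val_mk]; first | omega | tauto | (simp_all; omega) | simp_all⟩

lemma irred_J4_3 : IrredGraph (Jgraph4 3) := by
  apply irred_of_cross
  intro u hu
  exact ⟨⟨u, by omega⟩, ⟨2, by omega⟩, by rw [J4_adj]; simp only [Fin.val_mk]; first | omega | tauto | (simp_all; omega) | simp_all, by simp only [Fin.val_mk]; first | omega | tauto | (simp_all; omega) | simp_all, by simp only [Fin.val_mk]; first | omega | tauto | (simp_all; omega) | simp_all⟩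

lemma irred_L_3 : IrredGraph (Lgraph 3) := by
  apply irred_of_cross
  intro u hu
  exact ⟨⟨u, by omega⟩, ⟨u + 1, by omega⟩, by rw [L_adj]; simp only [Fin.val_mk]; first | omega | tauto | (simp_all; omega) | simp_all, by simp only [Fin.val_mk]; first | omega | tauto | (simp_all; omega) | simp_all, by simp only [Fin.val_mk]; first | omega | tauto | (simp_all; omega) | simp_all⟩

lemma irred_Q1 : IrredGraph Qgraph1 := by
  apply irred_of_cross
  intro u hu
  have h2 : u ≤ 2 := by omega
  rcases Nat.lt_or_ge u 2 with h | h
  · exact ⟨⟨0, by omega⟩, ⟨2, by omega⟩, by rw [Q1_adj]; simp only [Fin.val_mk]; first | omega | tauto | (simp_all; omega) | simp_all, by simp only [Fin.val_mk]; first | omega | tauto | (simp_all; omega) | simp_all, by simp only [Fin.val_mk]; first | omega | tauto | (simp_all; omega) | simp_all⟩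
  · exact ⟨⟨1, by omega⟩, ⟨3, by omega⟩, by rw [Q1_adj]; simp only [Fin.val_mk]; first | omega | tauto | (simp_all; omega) | simp_all, by simp only [Fin.val_mk]; first | omega | tauto | (simp_all; omega) | simp_all, by simp only [Fin.val_mk]; first | omega | tauto | (simp_all; omega) | simp_all⟩

lemma irred_Q2 : IrredGraph Qgraph2 := by
  apply irred_of_cross
  intro u hu
  rcases eq_or_ne u 1 with h | h
  · exact ⟨⟨1, by omega⟩, ⟨2, by omega⟩, by rw [Q2_adj]; simp only [Fin.val_mk]; first | omega | tauto | (simp_all; omega) | simp_all, by simp only [Fin.val_mk]; first | omega | tauto | (simp_all; omega) | simp_all, by simp only [Fin.val_mk]; first | omega | tauto | (simp_all; omega) | simp_all⟩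
  · exact ⟨⟨0, by omega⟩, ⟨3, by omega⟩, by rw [Q2_adj]; simp only [Fin.val_mk]; first | omega | tauto | (simp_all; omega) | simp_all, by simp only [Fin.val_mk]; first | omega | tauto | (simp_all; omega) | simp_all, by simp only [Fin.val_mk]; first | omega | tauto | (simp_all; omega) | simp_all⟩

lemma irred_J2_4 : IrredGraph (Jgraph2 4) := by
  apply irred_of_cross
  intro u hu
  exact ⟨⟨0, by omega⟩, ⟨3, by omega⟩, by rw [J2_adj]; simp only [Fin.val_mk]; first | omega | tauto | (simp_all; omega) | simp_all, by simp only [Fin.val_mk]; first | omega | tauto | (simp_all; omega) | simp_all, by simp only [Fin.val_mk]; first | omega | tauto | (simp_all; omega) | simp_all⟩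

lemma irred_K1 : IrredGraph (Jgraph1 1) := by
  rintro ⟨u, v, huv, -⟩
  have := u.isLt; have := v.isLt
  have : (u:ℕ) < (v:ℕ) := huv
  omega

lemma irred_K2 : IrredGraph (Jgraph1 2) := by
  apply irred_of_cross
  intro u hu
  exact ⟨⟨0, by omega⟩, ⟨1, by omega⟩, by rw [J1_adj]; simp only [Fin.val_mk]; first | omega | tauto | (simp_all; omega) | simp_all, by simp only [Fin.val_mk]; first | omega | tauto | (simp_all; omega) | simp_all, by simp only [Fin.val_mk]; first | omega | tauto | (simp_all; omega) | simp_all⟩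

/-! ### Embedding machinery -/

lemma indSub_of_emb {m h : ℕ} (G : SimpleGraph (Fin h)) (P : SimpleGraph (Fin m))
    (f : Fin m → Fin h) (hf : StrictMono f)
    (hadj : ∀ i j, P.Adj i j ↔ G.Adj (f i) (f j)) : IndSub P G :=
  ⟨OrderEmbedding.ofStrictMono f hf, hadj⟩

def fmap3 {h : ℕ} (a b c : Fin h) : Fin 3 → Fin h :=
  fun i => if (i : ℕ) = 0 then a else if (i : ℕ) = 1 then b else c

lemma fmap3_sm {h : ℕ} {a b c : Fin h} (h1 : a < b) (h2 : b < c) :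
    StrictMono (fmap3 a b c) := by
  intro i j hij
  fin_cases i <;> fin_cases j <;> simp_all [fmap3] <;>
    first | exact h1 | exact h2 | exact h1.trans h2 | omega

def fmap4 {h : ℕ} (a b c d : Fin h) : Fin 4 → Fin h :=
  fun i => if (i : ℕ) = 0 then a else if (i : ℕ) = 1 then b else if (i : ℕ) = 2 then c else d

lemma fmap4_sm {h : ℕ} {a b c d : Fin h} (h1 : a < b) (h2 : b < c) (h3 : c < d) :
    StrictMono (fmap4 a b c d) := by
  intro i j hij
  fin_cases i <;> fin_cases j <;> simp_all [fmap4] <;>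
    first | exact h1 | exact h2 | exact h3 | exact h1.trans h2 | exact h2.trans h3 | exact (h1.trans h2).trans h3 | omega

lemma embed_K1 {h : ℕ} (G : SimpleGraph (Fin h)) (hh : 1 ≤ h) : IndSub (Jgraph1 1) G := by
  refine indSub_of_emb G _ (fun _ => ⟨0, hh⟩) (fun i j hij => absurd hij (by omega)) ?_
  intro i j
  have : i = j := Subsingleton.elim i j
  subst this
  simp

lemma embed_K2 {h : ℕ} {G : SimpleGraph (Fin h)} {a b : Fin h} (h1 : a < b)
    (hab : G.Adj a b) : IndSub (Jgraph1 2) G := by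
  have hba := hab.symm
  refine indSub_of_emb G _ (fun i => if (i : ℕ) = 0 then a else b) ?_ ?_
  · intro i j hij
    fin_cases i <;> fin_cases j <;> simp_all <;> first | exact h1 | omega
  · intro i j
    fin_cases i <;> fin_cases j <;> simp [J1_adj, hab, hba]

section triples
variable {h : ℕ} {G : SimpleGraph (Fin h)} {a b c : Fin h}

lemma embed_J1_3 (h1 : a < b) (h2 : b < c) (e1 : G.Adj a b) (e2 : G.Adj b c)
    (e3 : G.Adj a c) : IndSub (Jgraph1 3) G := by
  have e1' := e1.symm; have e2' := e2.symm; have e3' := e3.symm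
  refine indSub_of_emb G _ (fmap3 a b c) (fmap3_sm h1 h2) ?_
  intro i j
  fin_cases i <;> fin_cases j <;>
    simp [fmap3, J1_adj, e1, e2, e3, e1', e2', e3'] <;> try decide

lemma embed_J2_3 (h1 : a < b) (h2 : b < c) (e1 : ¬ G.Adj a b) (e2 : ¬ G.Adj b c)
    (e3 : G.Adj a c) : IndSub (Jgraph2 3) G := by
  have e1' : ¬ G.Adj b a := fun H => e1 H.symm
  have e2' : ¬ G.Adj c b := fun H => e2 H.symm
  have e3' := e3.symm
  refine indSub_of_emb G _ (fmap3 a b c) (fmap3_sm h1 h2) ?_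
  intro i j
  fin_cases i <;> fin_cases j <;>
    simp [fmap3, J2_adj, e1, e2, e3, e1', e2', e3'] <;> try decide

lemma embed_J3_3 (h1 : a < b) (h2 : b < c) (e1 : G.Adj a b) (e2 : ¬ G.Adj b c)
    (e3 : G.Adj a c) : IndSub (Jgraph3 3) G := by
  have e1' := e1.symm
  have e2' : ¬ G.Adj c b := fun H => e2 H.symm
  have e3' := e3.symm
  refine indSub_of_emb G _ (fmap3 a b c) (fmap3_sm h1 h2) ?_
  intro i j
  fin_cases i <;> fin_cases j <;>
    simp [fmap3, J3_adj, e1, e2, e3, e1', e2', e3'] <;> try decide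

lemma embed_J4_3 (h1 : a < b) (h2 : b < c) (e1 : ¬ G.Adj a b) (e2 : G.Adj b c)
    (e3 : G.Adj a c) : IndSub (Jgraph4 3) G := by
  have e1' : ¬ G.Adj b a := fun H => e1 H.symm
  have e2' := e2.symm
  have e3' := e3.symm
  refine indSub_of_emb G _ (fmap3 a b c) (fmap3_sm h1 h2) ?_
  intro i j
  fin_cases i <;> fin_cases j <;>
    simp [fmap3, J4_adj, e1, e2, e3, e1', e2', e3'] <;> try decide

lemma embed_L_3 (h1 : a < b) (h2 : b < c) (e1 : G.Adj a b) (e2 : G.Adj b c)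
    (e3 : ¬ G.Adj a c) : IndSub (Lgraph 3) G := by
  have e1' := e1.symm; have e2' := e2.symm
  have e3' : ¬ G.Adj c a := fun H => e3 H.symm
  refine indSub_of_emb G _ (fmap3 a b c) (fmap3_sm h1 h2) ?_
  intro i j
  fin_cases i <;> fin_cases j <;>
    simp [fmap3, L_adj, e1, e2, e3, e1', e2', e3'] <;> try decide

end triples

section quads
variable {h : ℕ} {G : SimpleGraph (Fin h)} {a b c d : Fin h}

lemma embed_Q1 (h1 : a < b) (h2 : b < c) (h3 : c < d)
    (e1 : G.Adj a c) (e2 : G.Adj b d)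
    (n1 : ¬ G.Adj a b) (n2 : ¬ G.Adj a d) (n3 : ¬ G.Adj b c) (n4 : ¬ G.Adj c d) :
    IndSub Qgraph1 G := by
  have e1' := e1.symm; have e2' := e2.symm
  have n1' : ¬ G.Adj b a := fun H => n1 H.symm
  have n2' : ¬ G.Adj d a := fun H => n2 H.symm
  have n3' : ¬ G.Adj c b := fun H => n3 H.symm
  have n4' : ¬ G.Adj d c := fun H => n4 H.symm
  refine indSub_of_emb G _ (fmap4 a b c d) (fmap4_sm h1 h2 h3) ?_
  intro i j
  fin_cases i <;> fin_cases j <;>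
    simp [fmap4, Q1_adj, e1, e2, e1', e2', n1, n2, n3, n4, n1', n2', n3', n4'] <;> try decide

lemma embed_Q2 (h1 : a < b) (h2 : b < c) (h3 : c < d)
    (e1 : G.Adj a d) (e2 : G.Adj b c)
    (n1 : ¬ G.Adj a b) (n2 : ¬ G.Adj a c) (n3 : ¬ G.Adj b d) (n4 : ¬ G.Adj c d) :
    IndSub Qgraph2 G := by
  have e1' := e1.symm; have e2' := e2.symm
  have n1' : ¬ G.Adj b a := fun H => n1 H.symm
  have n2' : ¬ G.Adj c a := fun H => n2 H.symm
  have n3' : ¬ G.Adj d b := fun H => n3 H.symm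
  have n4' : ¬ G.Adj d c := fun H => n4 H.symm
  refine indSub_of_emb G _ (fmap4 a b c d) (fmap4_sm h1 h2 h3) ?_
  intro i j
  fin_cases i <;> fin_cases j <;>
    simp [fmap4, Q2_adj, e1, e2, e1', e2', n1, n2, n3, n4, n1', n2', n3', n4'] <;> try decide

lemma embed_J2_4 (h1 : a < b) (h2 : b < c) (h3 : c < d)
    (e1 : G.Adj a d) (n0 : ¬ G.Adj b c)
    (n1 : ¬ G.Adj a b) (n2 : ¬ G.Adj a c) (n3 : ¬ G.Adj b d) (n4 : ¬ G.Adj c d) :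
    IndSub (Jgraph2 4) G := by
  have e1' := e1.symm
  have n0' : ¬ G.Adj c b := fun H => n0 H.symm
  have n1' : ¬ G.Adj b a := fun H => n1 H.symm
  have n2' : ¬ G.Adj c a := fun H => n2 H.symm
  have n3' : ¬ G.Adj d b := fun H => n3 H.symm
  have n4' : ¬ G.Adj d c := fun H => n4 H.symm
  refine indSub_of_emb G _ (fmap4 a b c d) (fmap4_sm h1 h2 h3) ?_
  intro i j
  fin_cases i <;> fin_cases j <;>
    simp [fmap4, J2_adj, e1, e1', n0, n0', n1, n2, n3, n4, n1', n2', n3', n4'] <;> try decide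

end quads
/-! ### ℕ-valued adjacency -/

def AdV {h : ℕ} (G : SimpleGraph (Fin h)) (x y : ℕ) : Prop :=
  ∃ (hx : x < h) (hy : y < h), G.Adj ⟨x, hx⟩ ⟨y, hy⟩

namespace AdV
variable {h : ℕ} {G : SimpleGraph (Fin h)} {x y : ℕ}

lemma symm (hxy : AdV G x y) : AdV G y x := by
  obtain ⟨hx, hy, hadj⟩ := hxy
  exact ⟨hy, hx, hadj.symm⟩

lemma ltl (hxy : AdV G x y) : x < h := hxy.1
lemma ltr (hxy : AdV G x y) : y < h := hxy.2.1

lemma ne (hxy : AdV G x y) : x ≠ y := by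
  obtain ⟨hx, hy, hadj⟩ := hxy
  intro he
  subst he
  exact G.loopless.irrefl _ hadj

lemma adj (hxy : AdV G x y) (hx : x < h) (hy : y < h) : G.Adj ⟨x, hx⟩ ⟨y, hy⟩ := by
  obtain ⟨_, _, hadj⟩ := hxy
  exact hadj

end AdV

lemma AdV.adj2 {h : ℕ} {G : SimpleGraph (Fin h)} {x y : ℕ} (hxy : AdV G x y)
    (u v : Fin h) (hu : (u : ℕ) = x) (hv : (v : ℕ) = y) : G.Adj u v := by
  obtain ⟨hx, hy, hadj⟩ := hxy
  have h1 : u = ⟨x, hx⟩ := Fin.val_injective (by simpa using hu)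
  have h2 : v = ⟨y, hy⟩ := Fin.val_injective (by simpa using hv)
  rw [h1, h2]; exact hadj

lemma adv_of_adj {h : ℕ} {G : SimpleGraph (Fin h)} {u v : Fin h} (hadj : G.Adj u v) :
    AdV G (u : ℕ) (v : ℕ) := ⟨u.isLt, v.isLt, by simpa using hadj⟩

lemma cross_adv {h : ℕ} {G : SimpleGraph (Fin h)} (hirr : IrredGraph G) {u : ℕ}
    (hu : u + 1 < h) : ∃ x y : ℕ, AdV G x y ∧ x ≤ u ∧ u < y := by
  obtain ⟨i, j, hadj, h1, h2⟩ := irred_edge hirr hu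
  exact ⟨i, j, adv_of_adj hadj, h1, h2⟩

/-! ### Small order implies InJ -/

lemma InJ_small {h : ℕ} {G : SimpleGraph (Fin h)} (hirr : IrredGraph G) (hh : h ≤ 2) :
    InJ G := by
  left
  interval_cases h
  · ext u v
    exact u.elim0
  · ext u v
    have : u = v := Subsingleton.elim u v
    subst this
    simp [J1_adj]
  · obtain ⟨x, y, hxy, h1, h2⟩ := cross_adv hirr (by omega : (0:ℕ) + 1 < 2)
    have hx0 : x = 0 := by omega
    have hy1 : y = 1 := by have := hxy.ltr; omega
    subst hx0; subst hy1
    ext u v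
    rw [J1_adj]
    constructor
    · intro hadj he
      have huv : u = v := Fin.val_injective he
      subst huv
      exact G.loopless.irrefl u hadj
    · intro hne
      have hu := u.isLt; have hv := v.isLt
      rcases Nat.lt_or_ge (u : ℕ) (v : ℕ) with hlt | hge
      · have h1 : (u:ℕ) = 0 := by omega
        have h2 : (v:ℕ) = 1 := by omega
        have := hxy.adj (by omega) (by omega)
        convert this using 2 <;> simp [Fin.ext_iff, h1, h2]
      · have hlt : (v:ℕ) < (u:ℕ) := by omega
        have h1 : (v:ℕ) = 0 := by omega
        have h2 : (u:ℕ) = 1 := by omega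
        have := (hxy.adj (by omega) (by omega)).symm
        convert this using 2 <;> simp [Fin.ext_iff, h1, h2]

/-! ### All irreducible triples of a fixed type -/

section AllType
variable {h : ℕ} {G : SimpleGraph (Fin h)}

/-- If every irreducible triple is complete, `G` is complete. -/
lemma all_T1 (hirr : IrredGraph G)
    (H : ∀ a b c : ℕ, a < b → b < c → c < h →
      (AdV G a c ∨ (AdV G a b ∧ AdV G b c)) → AdV G a b ∧ AdV G b c ∧ AdV G a c) :
    G = Jgraph1 h := by
  -- long edges fill in
  have a1 : ∀ a c, AdV G a c → a < c → ∀ m, a < m → m < c → AdV G a m ∧ AdV G m c := by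
    intro a c hac hlt m h1 h2
    have := H a m c h1 h2 hac.ltr (Or.inl hac)
    exact ⟨this.1, this.2.1⟩
  -- consecutive edges
  have a2 : ∀ u : ℕ, u + 1 < h → AdV G u (u + 1) := by
    intro u hu
    obtain ⟨i, j, hadj, h1, h2⟩ := cross_adv hirr hu
    have hij : i < j := by omega
    have hjh := hadj.ltr
    rcases Nat.lt_or_ge i u with hi | hi
    · -- i < u < j
      have hAiu : AdV G i u ∧ AdV G u j := a1 i j hadj hij u hi h2
      rcases Nat.lt_or_ge (u + 1) j with hj | hj
      · have hAiu1 : AdV G i (u + 1) ∧ _ := a1 i j hadj hij (u + 1) (by omega) hj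
        exact (H i u (u + 1) hi (by omega) hu (Or.inl hAiu1.1)).2.1
      · have : j = u + 1 := by omega
        subst this
        exact hAiu.2
    · have hiu : i = u := by omega
      subst hiu
      rcases Nat.lt_or_ge (i + 1) j with hj | hj
      · exact (a1 i j hadj hij (i + 1) (by omega) hj).1
      · have : j = i + 1 := by omega
        subst this
        exact hadj
  -- all pairs
  have a3 : ∀ d : ℕ, ∀ a b : ℕ, b < h → b = a + 1 + d → AdV G a b := by
    intro d
    induction d with
    | zero => intro a b hb he; subst he; exact a2 a hb
    | succ d ih =>
      intro a b hb he
      have h1 : AdV G a (b - 1) := ih a (b - 1) (by omega) (by omega)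
      have h2 : AdV G (b - 1) b := by
        have := a2 (b - 1) (by omega)
        have he2 : b - 1 + 1 = b := by omega
        rwa [he2] at this
      exact (H a (b - 1) b (by omega) (by omega) hb (Or.inr ⟨h1, h2⟩)).2.2
  ext u v
  rw [J1_adj]
  constructor
  · intro hadj he
    have huv : u = v := Fin.val_injective he
    subst huv
    exact G.loopless.irrefl u hadj
  · intro hne
    rcases Nat.lt_or_ge (u : ℕ) (v : ℕ) with hlt | hge
    · have := a3 ((v:ℕ) - (u:ℕ) - 1) (u:ℕ) (v:ℕ) v.isLt (by omega)
      simpa using this.adj u.isLt v.isLt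
    · have hlt : (v:ℕ) < (u:ℕ) := by omega
      have := (a3 ((u:ℕ) - (v:ℕ) - 1) (v:ℕ) (u:ℕ) u.isLt (by omega)).symm
      simpa using this.adj u.isLt v.isLt

/-- If every irreducible triple is a path `ab, bc`, `G` is the monotone path. -/
lemma all_T5 (hirr : IrredGraph G)
    (H : ∀ a b c : ℕ, a < b → b < c → c < h →
      (AdV G a c ∨ (AdV G a b ∧ AdV G b c)) → AdV G a b ∧ AdV G b c ∧ ¬ AdV G a c) :
    G = Lgraph h := by
  have b1 : ∀ a c, a + 2 ≤ c → c < h → ¬ AdV G a c := by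
    intro a c hlen hc hac
    exact (H a (a + 1) c (by omega) (by omega) hc (Or.inl hac)).2.2 hac
  have b2 : ∀ u : ℕ, u + 1 < h → AdV G u (u + 1) := by
    intro u hu
    obtain ⟨i, j, hadj, h1, h2⟩ := cross_adv hirr hu
    have : ¬ (i + 2 ≤ j) := fun hle => b1 i j hle hadj.ltr hadj
    have hi : i = u := by omega
    have hj : j = u + 1 := by omega
    subst hi; subst hj
    exact hadj
  ext u v
  rw [L_adj]
  constructor
  · intro hadj
    have h1 := adv_of_adj hadj
    rcases Nat.lt_or_ge (u : ℕ) (v : ℕ) with hlt | hge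
    · left
      by_contra hne
      exact b1 _ _ (by omega) v.isLt h1
    · right
      have hne := h1.ne
      by_contra hne2
      exact b1 _ _ (by omega) u.isLt h1.symm
  · intro hor
    rcases hor with he | he
    · have := b2 (u:ℕ) (by omega)
      rw [← he] at this
      simpa using this.adj u.isLt v.isLt
    · have := (b2 (v:ℕ) (by omega)).symm
      rw [← he] at this
      simpa using this.adj u.isLt v.isLt

/-- If every irreducible triple is a star from its first vertex, `G = J₃`. -/
lemma all_T3 (hirr : IrredGraph G)
    (H : ∀ a b c : ℕ, a < b → b < c → c < h →
      (AdV G a c ∨ (AdV G a b ∧ AdV G b c)) → AdV G a b ∧ ¬ AdV G b c ∧ AdV G a c) :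
    G = Jgraph3 h := by
  -- no vertex before an edge is adjacent to its endpoints
  have c2 : ∀ w u v : ℕ, w < u → u < v → v < h → AdV G u v → ¬ AdV G w u ∧ ¬ AdV G w v := by
    intro w u v hwu huv hv hadj
    constructor
    · intro hwu'
      exact (H w u v hwu huv hv (Or.inr ⟨hwu', hadj⟩)).2.1 hadj
    · intro hwv
      exact (H w u v hwu huv hv (Or.inl hwv)).2.1 hadj
  -- 0 is adjacent to everything
  have c3 : ∀ t : ℕ, t + 1 < h → AdV G 0 (t + 1) := by
    intro t
    induction t using Nat.strong_induction_on with
    | _ t ih =>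
      intro ht
      obtain ⟨i, j, hadj, h1, h2⟩ := cross_adv hirr ht
      rcases Nat.eq_zero_or_pos i with hi | hi
      · subst hi
        rcases Nat.lt_or_ge (t + 1) j with hj | hj
        · exact (H 0 (t + 1) j (by omega) hj hadj.ltr (Or.inl hadj)).1
        · have : j = t + 1 := by omega
          subst this
          exact hadj
      · exfalso
        have h0i : ¬ AdV G 0 i := (c2 0 i j hi (by omega) hadj.ltr hadj).1
        have : AdV G 0 (i - 1 + 1) := ih (i - 1) (by omega) (by omega)
        have he : i - 1 + 1 = i := by omega
        rw [he] at this
        exact h0i this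
  -- no other edges
  have c4 : ∀ u v : ℕ, 0 < u → u < v → v < h → ¬ AdV G u v := by
    intro u v hu huv hv hadj
    have h0u : ¬ AdV G 0 u := (c2 0 u v hu huv hv hadj).1
    have : AdV G 0 (u - 1 + 1) := c3 (u - 1) (by omega)
    have he : u - 1 + 1 = u := by omega
    rw [he] at this
    exact h0u this
  ext u v
  rw [J3_adj]
  constructor
  · intro hadj
    have h1 := adv_of_adj hadj
    have hne := h1.ne
    refine ⟨?_, hne⟩
    rcases Nat.lt_or_ge (u : ℕ) (v : ℕ) with hlt | hge
    · left
      by_contra h0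
      exact c4 _ _ (by omega) hlt v.isLt h1
    · right
      by_contra h0
      exact c4 _ _ (by omega) (by omega) u.isLt h1.symm
  · rintro ⟨h0, hne⟩
    rcases h0 with h0 | h0
    · have : AdV G 0 ((v:ℕ) - 1 + 1) := c3 ((v:ℕ) - 1) (by omega)
      have he : (v:ℕ) - 1 + 1 = (v:ℕ) := by omega
      rw [he, ← h0] at this
      simpa using this.adj u.isLt v.isLt
    · have : AdV G 0 ((u:ℕ) - 1 + 1) := c3 ((u:ℕ) - 1) (by omega)
      have he : (u:ℕ) - 1 + 1 = (u:ℕ) := by omega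
      rw [he, ← h0] at this
      simpa using this.symm.adj u.isLt v.isLt

/-- If every irreducible triple is a star into its last vertex, `G = J₄`. -/
lemma all_T4 (hirr : IrredGraph G)
    (H : ∀ a b c : ℕ, a < b → b < c → c < h →
      (AdV G a c ∨ (AdV G a b ∧ AdV G b c)) → ¬ AdV G a b ∧ AdV G b c ∧ AdV G a c) :
    G = Jgraph4 h := by
  have d2 : ∀ u v w : ℕ, u < v → v < w → w < h → AdV G u v → ¬ AdV G v w ∧ ¬ AdV G u w := by
    intro u v w huv hvw hw hadj
    constructor
    · intro hvw'
      exact (H u v w huv hvw hw (Or.inr ⟨hadj, hvw'⟩)).1 hadj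
    · intro huw
      exact (H u v w huv hvw hw (Or.inl huw)).1 hadj
  -- everything is adjacent to h-1 ; induction on distance from the top
  have d3 : ∀ d : ℕ, ∀ t : ℕ, t + 1 < h → h - 2 - t ≤ d → AdV G t (h - 1) := by
    intro d
    induction d with
    | zero =>
      intro t ht hd
      obtain ⟨i, j, hadj, h1, h2⟩ := cross_adv hirr ht
      have hj : j = h - 1 := by have := hadj.ltr; omega
      subst hj
      rcases Nat.lt_or_ge i t with hi | hi
      · exact (H i t (h - 1) hi (by omega) (by omega) (Or.inl hadj)).2.1
      · have : i = t := by omega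
        subst this
        exact hadj
    | succ d ih =>
      intro t ht hd
      rcases le_or_gt (h - 2 - t) d with hle | hlt
      · exact ih t ht hle
      · have htlt : t < h - 2 := by omega
        obtain ⟨i, j, hadj, h1, h2⟩ := cross_adv hirr ht
        have hjh := hadj.ltr
        rcases Nat.eq_or_lt_of_le (by omega : j ≤ h - 1) with hj | hj
        · subst hj
          rcases Nat.lt_or_ge i t with hi | hi
          · exact (H i t (h - 1) hi (by omega) (by omega) (Or.inl hadj)).2.1
          · have : i = t := by omega
            subst this
            exact hadj
        · exfalso
          have hnj : ¬ AdV G j (h - 1) := (d2 i j (h - 1) (by omega) (by omega) (by omega) hadj).1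
          exact hnj (ih j (by omega) (by omega))
  have d4 : ∀ u v : ℕ, u < v → v < h - 1 → ¬ AdV G u v := by
    intro u v huv hv hadj
    have := (d2 u v (h - 1) huv hv (by omega) hadj).1
    exact this (d3 h v (by omega) (by omega))
  ext u v
  rw [J4_adj]
  constructor
  · intro hadj
    have h1 := adv_of_adj hadj
    have hne := h1.ne
    refine ⟨?_, hne⟩
    rcases Nat.lt_or_ge (u : ℕ) (v : ℕ) with hlt | hge
    · right
      by_contra h0
      exact d4 _ _ hlt (by have := v.isLt; omega) h1
    · left
      by_contra h0
      exact d4 _ _ (by omega) (by have := u.isLt; omega) h1.symm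
  · rintro ⟨h0, hne⟩
    rcases h0 with h0 | h0
    · have : AdV G (v:ℕ) (h - 1) := d3 h (v:ℕ) (by have := v.isLt; omega) (by omega)
      rw [← h0] at this
      simpa using this.symm.adj u.isLt v.isLt
    · have : AdV G (u:ℕ) (h - 1) := d3 h (u:ℕ) (by have := u.isLt; omega) (by omega)
      rw [← h0] at this
      simpa using this.adj u.isLt v.isLt

end AllType
/-! ### Matching case -/

lemma nadj {h : ℕ} {G : SimpleGraph (Fin h)} {x y : ℕ} (hn : ¬ AdV G x y)
    (hx : x < h) (hy : y < h) : ¬ G.Adj ⟨x, hx⟩ ⟨y, hy⟩ :=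
  fun H => hn (adv_of_adj H)

lemma graph_ne_of_adj {n : ℕ} {P Q : SimpleGraph (Fin n)} (u v : Fin n)
    (hP : P.Adj u v) (hQ : ¬ Q.Adj u v) : P ≠ Q := fun he => hQ (he ▸ hP)

lemma ne12 : Jgraph1 3 ≠ Jgraph2 3 :=
  graph_ne_of_adj 0 1 (by rw [J1_adj]; decide) (by rw [J2_adj]; decide)
lemma ne13 : Jgraph1 3 ≠ Jgraph3 3 :=
  graph_ne_of_adj 1 2 (by rw [J1_adj]; decide) (by rw [J3_adj]; decide)
lemma ne14 : Jgraph1 3 ≠ Jgraph4 3 :=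
  graph_ne_of_adj 0 1 (by rw [J1_adj]; decide) (by rw [J4_adj]; decide)
lemma ne15 : Jgraph1 3 ≠ Lgraph 3 :=
  graph_ne_of_adj 0 2 (by rw [J1_adj]; decide) (by rw [L_adj]; decide)
lemma ne23 : Jgraph2 3 ≠ Jgraph3 3 :=
  (graph_ne_of_adj 0 1 (by rw [J3_adj]; decide) (by rw [J2_adj]; decide)).symm
lemma ne24 : Jgraph2 3 ≠ Jgraph4 3 :=
  (graph_ne_of_adj 1 2 (by rw [J4_adj]; decide) (by rw [J2_adj]; decide)).symm
lemma ne25 : Jgraph2 3 ≠ Lgraph 3 :=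
  (graph_ne_of_adj 0 1 (by rw [L_adj]; decide) (by rw [J2_adj]; decide)).symm
lemma ne34 : Jgraph3 3 ≠ Jgraph4 3 :=
  graph_ne_of_adj 0 1 (by rw [J3_adj]; decide) (by rw [J4_adj]; decide)
lemma ne35 : Jgraph3 3 ≠ Lgraph 3 :=
  (graph_ne_of_adj 1 2 (by rw [L_adj]; decide) (by rw [J3_adj]; decide)).symm
lemma ne45 : Jgraph4 3 ≠ Lgraph 3 :=
  (graph_ne_of_adj 0 1 (by rw [L_adj]; decide) (by rw [J4_adj]; decide)).symm
lemma neQ1J : Qgraph1 ≠ Jgraph2 4 :=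
  graph_ne_of_adj 0 2 (by rw [Q1_adj]; decide) (by rw [J2_adj]; decide)
lemma neQ2J : Qgraph2 ≠ Jgraph2 4 :=
  graph_ne_of_adj 1 2 (by rw [Q2_adj]; decide) (by rw [J2_adj]; decide)

section Matching
variable {h : ℕ} {G : SimpleGraph (Fin h)}

/-- If the only edge is `{0,h-1}`, then `G = J₂`. -/
lemma match_J2 (hirr : IrredGraph G) (h3 : 3 ≤ h)
    (Hs : ∀ u v : ℕ, AdV G u v → u < v → u = 0 ∧ v = h - 1) : G = Jgraph2 h := by
  have e0 : AdV G 0 (h - 1) := by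
    obtain ⟨x, y, hxy, h1, h2⟩ := cross_adv hirr (by omega : (0:ℕ) + 1 < h)
    have hx : x = 0 := by omega
    have := Hs x y hxy (by omega)
    rw [← hx, ← this.2]
    exact hxy
  ext u v
  rw [J2_adj]
  constructor
  · intro hadj
    have h1 := adv_of_adj hadj
    have hne := h1.ne
    refine ⟨?_, hne⟩
    rcases Nat.lt_or_ge (u:ℕ) (v:ℕ) with hlt | hge
    · exact Or.inl (Hs _ _ h1 hlt)
    · exact Or.inr (Hs _ _ h1.symm (by omega))
  · rintro ⟨hc | hc, hne⟩
    · exact e0.adj2 u v hc.1 hc.2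
    · exact (e0.symm).adj2 u v hc.2 hc.1

/-- In the matching case, if `G` is not `J₂` there are two nested or crossing edges. -/
lemma find_pair (hirr : IrredGraph G) (h3 : 3 ≤ h)
    (Hm : ∀ x a b : ℕ, AdV G x a → AdV G x b → a = b)
    (hns : ¬ ∀ u v : ℕ, AdV G u v → u < v → u = 0 ∧ v = h - 1) :
    ∃ p1 p2 p3 p4 : ℕ, p1 < p2 ∧ p2 < p3 ∧ p3 < p4 ∧ p4 < h ∧
      ((AdV G p1 p4 ∧ AdV G p2 p3) ∨ (AdV G p1 p3 ∧ AdV G p2 p4)) := by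
  push_neg at hns
  obtain ⟨a, b, hab, hlt, hne⟩ := hns
  obtain ⟨x, y, hxy, h1, h2⟩ := cross_adv hirr (by omega : (0:ℕ) + 1 < h)
  have hx : x = 0 := by omega
  subst hx
  have hyh := hxy.ltr
  rcases Nat.eq_or_lt_of_le (by omega : y ≤ h - 1) with hy | hy
  · -- spanning edge (0, h-1); (a,b) is nested inside
    subst hy
    have ha0 : a ≠ 0 := by
      intro h0
      subst h0
      exact hne rfl (Hm 0 b (h - 1) hab hxy)
    have hbh : b ≠ h - 1 := by
      intro hb
      subst hb
      exact hne (Hm (h-1) a 0 hab.symm hxy.symm) rfl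
    have hbh2 := hab.ltr
    exact ⟨0, a, b, h - 1, by omega, hlt, by omega, by omega, Or.inl ⟨hxy, hab⟩⟩
  · -- edge (0,y) with y < h-1 : find a crossing edge over gap y
    obtain ⟨x2, y2, hxy2, h21, h22⟩ := cross_adv hirr (by omega : y + 1 < h)
    have hx2 : x2 ≠ 0 := by
      intro h0
      subst h0
      have := Hm 0 y2 y hxy2 hxy
      omega
    have hx2y : x2 ≠ y := by
      intro h0
      subst h0
      have := Hm x2 y2 0 hxy2 hxy.symm
      omega
    exact ⟨0, x2, y, y2, by omega, by omega, by omega, hxy2.ltr, Or.inr ⟨hxy, hxy2⟩⟩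

/-- matching case, `h = 4`: `G` is one of the `Q`s. -/
lemma match_Q (hirr : IrredGraph G)
    (Hm : ∀ x a b : ℕ, AdV G x a → AdV G x b → a = b) (h4 : h = 4)
    (hp : ∃ p1 p2 p3 p4 : ℕ, p1 < p2 ∧ p2 < p3 ∧ p3 < p4 ∧ p4 < h ∧
      ((AdV G p1 p4 ∧ AdV G p2 p3) ∨ (AdV G p1 p3 ∧ AdV G p2 p4))) : InJ G := by
  subst h4
  obtain ⟨p1, p2, p3, p4, h12, h23, h34, h4h, hcase⟩ := hp
  have e1 : p1 = 0 := by omega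
  have e2 : p2 = 1 := by omega
  have e3 : p3 = 2 := by omega
  have e4 : p4 = 3 := by omega
  subst e1; subst e2; subst e3; subst e4
  rcases hcase with ⟨ea, eb⟩ | ⟨ea, eb⟩
  · -- nested: edges {0,3},{1,2} : G = Q₂ pattern
    have key : ∀ a b : ℕ, a < 4 → AdV G a b →
        ((a=0∧b=3) ∨ (a=1∧b=2) ∨ (a=3∧b=0) ∨ (a=2∧b=1)) := by
      intro a b ha hv
      rcases (by omega : a = 0 ∨ a = 1 ∨ a = 2 ∨ a = 3) with rfl | rfl | rfl | rfl
      · have := Hm 0 b 3 hv ea; omega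
      · have := Hm 1 b 2 hv eb; omega
      · have := Hm 2 b 1 hv eb.symm; omega
      · have := Hm 3 b 0 hv ea.symm; omega
    right; right; right; right; right; right
    refine ⟨rfl, ⟨OrderEmbedding.ofStrictMono id strictMono_id, ?_⟩⟩
    intro i j
    rw [Q2_adj]
    constructor
    · intro hadj
      exact key _ _ i.isLt (adv_of_adj hadj)
    · intro hcond
      rcases hcond with ⟨hu, hv⟩ | ⟨hu, hv⟩ | ⟨hu, hv⟩ | ⟨hu, hv⟩
      · exact ea.adj2 _ _ hu hv
      · exact eb.adj2 _ _ hu hv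
      · exact ea.symm.adj2 _ _ hu hv
      · exact eb.symm.adj2 _ _ hu hv
  · -- crossing: edges {0,2},{1,3} : G = Q₁ pattern
    have key : ∀ a b : ℕ, a < 4 → AdV G a b →
        ((a=0∧b=2) ∨ (a=1∧b=3) ∨ (a=2∧b=0) ∨ (a=3∧b=1)) := by
      intro a b ha hv
      rcases (by omega : a = 0 ∨ a = 1 ∨ a = 2 ∨ a = 3) with rfl | rfl | rfl | rfl
      · have := Hm 0 b 2 hv ea; omega
      · have := Hm 1 b 3 hv eb; omega
      · have := Hm 2 b 0 hv ea.symm; omega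
      · have := Hm 3 b 1 hv eb.symm; omega
    right; right; right; right; right; left
    refine ⟨rfl, ⟨OrderEmbedding.ofStrictMono id strictMono_id, ?_⟩⟩
    intro i j
    rw [Q1_adj]
    constructor
    · intro hadj
      exact key _ _ i.isLt (adv_of_adj hadj)
    · intro hcond
      rcases hcond with ⟨hu, hv⟩ | ⟨hu, hv⟩ | ⟨hu, hv⟩ | ⟨hu, hv⟩
      · exact ea.adj2 _ _ hu hv
      · exact eb.adj2 _ _ hu hv
      · exact ea.symm.adj2 _ _ hu hv
      · exact eb.symm.adj2 _ _ hu hv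

end Matching
section Matching2
variable {h : ℕ} {G : SimpleGraph (Fin h)}

/-- matching case, `h ≥ 5`: find an induced `J₂⁽⁴⁾`. -/
lemma match_M2 (hirr : IrredGraph G)
    (Hm : ∀ x a b : ℕ, AdV G x a → AdV G x b → a = b) (h5 : 5 ≤ h)
    (hp : ∃ p1 p2 p3 p4 : ℕ, p1 < p2 ∧ p2 < p3 ∧ p3 < p4 ∧ p4 < h ∧
      ((AdV G p1 p4 ∧ AdV G p2 p3) ∨ (AdV G p1 p3 ∧ AdV G p2 p4))) :
    ∃ u x y v : ℕ, u < x ∧ x < y ∧ y < v ∧ v < h ∧ AdV G u v ∧ ¬ AdV G x y := by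
  by_contra HJ
  push_neg at HJ
  -- HJ : every pair strictly inside an edge is adjacent
  have HJ' : ∀ u x y v : ℕ, u < x → x < y → y < v → v < h → AdV G u v → AdV G x y := by
    intro u x y v h1 h2 h3 h4 hadj
    exact HJ u x y v h1 h2 h3 h4 hadj
  -- all edges have length ≤ 3
  have L1 : ∀ u v : ℕ, AdV G u v → u < v → v ≤ u + 3 := by
    intro u v hadj hlt
    by_contra hc
    push_neg at hc
    have hvh := hadj.ltr
    have a1 : AdV G (u+1) (u+2) := HJ' u (u+1) (u+2) v (by omega) (by omega) (by omega) hvh hadj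
    have a2 : AdV G (u+1) (u+3) := HJ' u (u+1) (u+3) v (by omega) (by omega) (by omega) hvh hadj
    have := Hm (u+1) (u+2) (u+3) a1 a2
    omega
  obtain ⟨p1, p2, p3, p4, h12, h23, h34, h4h, hcase⟩ := hp
  rcases hcase with ⟨ea, eb⟩ | ⟨ea, eb⟩
  · -- nested
    have hlen : p4 = p1 + 3 := by have := L1 p1 p4 ea (by omega); omega
    have hp2 : p2 = p1 + 1 := by omega
    have hp3 : p3 = p1 + 2 := by omega
    subst hlen; subst hp2; subst hp3
    -- p4 = h - 1
    have hr : p1 + 3 = h - 1 := by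
      by_contra hc
      obtain ⟨x, y, hxy, hx1, hx2⟩ := cross_adv hirr (by omega : p1 + 3 + 1 < h)
      have hyb := hxy.ltr
      have hx_lt : x < p1 := by
        rcases (by omega : x < p1 ∨ x = p1 ∨ x = p1+1 ∨ x = p1+2 ∨ x = p1+3) with hh|hq|hq|hq|hq
        · exact hh
        · rw [hq] at hxy; have := Hm _ y _ hxy ea; omega
        · rw [hq] at hxy; have := Hm _ y _ hxy eb; omega
        · rw [hq] at hxy; have := Hm _ y _ hxy eb.symm; omega
        · rw [hq] at hxy; have := Hm _ y _ hxy ea.symm; omega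
      have := L1 x y hxy (by omega)
      omega
    -- p1 = 0
    have hl : p1 = 0 := by
      by_contra hc
      obtain ⟨x, y, hxy, hx1, hx2⟩ := cross_adv hirr (by omega : (p1 - 1) + 1 < h)
      have hyb := hxy.ltr
      have hy_gt : p1 + 3 < y := by
        rcases (by omega : y = p1 ∨ y = p1+1 ∨ y = p1+2 ∨ y = p1+3 ∨ p1 + 3 < y) with hq|hq|hq|hq|hh
        · rw [hq] at hxy; have := Hm _ x _ hxy.symm ea; omega
        · rw [hq] at hxy; have := Hm _ x _ hxy.symm eb; omega
        · rw [hq] at hxy; have := Hm _ x _ hxy.symm eb.symm; omega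
        · rw [hq] at hxy; have := Hm _ x _ hxy.symm ea.symm; omega
        · exact hh
      have := L1 x y hxy (by omega)
      omega
    omega
  · -- crossing
    have hp32 : p3 = p1 + 2 ∧ p2 = p1 + 1 := by
      have hle := L1 p1 p3 ea (by omega)
      rcases (by omega : p3 = p1 + 2 ∨ p3 = p1 + 3) with hc | hc
      · constructor <;> omega
      · exfalso
        have hmid : AdV G (p1+1) (p1+2) :=
          HJ' p1 (p1+1) (p1+2) p3 (by omega) (by omega) (by omega) ea.ltr ea
        rcases (by omega : p2 = p1 + 1 ∨ p2 = p1 + 2) with rfl | h2c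
        · have := Hm (p1+1) (p1+2) p4 hmid eb; omega
        · rw [h2c] at eb
          have := Hm (p1+2) (p1+1) p4 hmid.symm eb; omega
    obtain ⟨hp3, hp2⟩ := hp32
    subst hp3; subst hp2
    have hp4 : p4 = p1 + 3 := by
      have hle := L1 (p1+1) p4 eb (by omega)
      rcases (by omega : p4 = p1 + 3 ∨ p4 = p1 + 4) with hc | hc
      · exact hc
      · exfalso
        subst hc
        have hmid : AdV G (p1+2) (p1+3) :=
          HJ' (p1+1) (p1+2) (p1+3) (p1+4) (by omega) (by omega) (by omega) eb.ltr eb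
        have := Hm (p1+2) (p1+3) p1 hmid ea.symm
        omega
    subst hp4
    have hr : p1 + 3 = h - 1 := by
      by_contra hc
      obtain ⟨x, y, hxy, hx1, hx2⟩ := cross_adv hirr (by omega : p1 + 3 + 1 < h)
      have hyb := hxy.ltr
      have hx_lt : x < p1 := by
        rcases (by omega : x < p1 ∨ x = p1 ∨ x = p1+1 ∨ x = p1+2 ∨ x = p1+3) with hh|hq|hq|hq|hq
        · exact hh
        · rw [hq] at hxy; have := Hm _ y _ hxy ea; omega
        · rw [hq] at hxy; have := Hm _ y _ hxy eb; omega
        · rw [hq] at hxy; have := Hm _ y _ hxy ea.symm; omega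
        · rw [hq] at hxy; have := Hm _ y _ hxy eb.symm; omega
      have := L1 x y hxy (by omega)
      omega
    have hl : p1 = 0 := by
      by_contra hc
      obtain ⟨x, y, hxy, hx1, hx2⟩ := cross_adv hirr (by omega : (p1 - 1) + 1 < h)
      have hyb := hxy.ltr
      have hy_gt : p1 + 3 < y := by
        rcases (by omega : y = p1 ∨ y = p1+1 ∨ y = p1+2 ∨ y = p1+3 ∨ p1 + 3 < y) with hq|hq|hq|hq|hh
        · rw [hq] at hxy; have := Hm _ x _ hxy.symm ea; omega
        · rw [hq] at hxy; have := Hm _ x _ hxy.symm eb; omega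
        · rw [hq] at hxy; have := Hm _ x _ hxy.symm ea.symm; omega
        · rw [hq] at hxy; have := Hm _ x _ hxy.symm eb.symm; omega
        · exact hh
      have := L1 x y hxy (by omega)
      omega
    omega

end Matching2
section Classify
variable {h : ℕ} {G : SimpleGraph (Fin h)}

lemma match_case (hirr : IrredGraph G) (hnJ : ¬ InJ G) (h3 : 3 ≤ h)
    (Hm : ∀ x a b : ℕ, AdV G x a → AdV G x b → a = b) :
    ∃ (P : SimpleGraph (Fin 3)) (R S : SimpleGraph (Fin 4)), R ≠ S ∧
      IrredGraph P ∧ IrredGraph R ∧ IrredGraph S ∧ IndSub P G ∧ IndSub R G ∧ IndSub S G := by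
  by_cases Hs : ∀ u v : ℕ, AdV G u v → u < v → u = 0 ∧ v = h - 1
  · exact absurd (Or.inr (Or.inl (match_J2 hirr h3 Hs))) hnJ
  obtain ⟨p1, p2, p3, p4, h12, h23, h34, h4h, hcase⟩ := find_pair hirr h3 Hm Hs
  have h4le : 4 ≤ h := by omega
  rcases eq_or_lt_of_le h4le with h4 | h5
  · exact absurd (match_Q hirr Hm h4.symm ⟨p1, p2, p3, p4, h12, h23, h34, h4h, hcase⟩) hnJ
  · have h5' : 5 ≤ h := h5
    obtain ⟨u, x, y, v, hux, hxy, hyv, hvh, huv, hnxy⟩ :=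
      match_M2 hirr Hm h5' ⟨p1, p2, p3, p4, h12, h23, h34, h4h, hcase⟩
    have embJ24 : IndSub (Jgraph2 4) G := by
      refine embed_J2_4 (a := ⟨u, by omega⟩) (b := ⟨x, by omega⟩) (c := ⟨y, by omega⟩)
        (d := ⟨v, hvh⟩) (by simp [Fin.mk_lt_mk]; omega) (by simp [Fin.mk_lt_mk]; omega)
        (by simp [Fin.mk_lt_mk]; omega) (huv.adj _ _) (nadj hnxy _ _) ?_ ?_ ?_ ?_
      · exact nadj (fun H => by have := Hm u x v H huv; omega) _ _
      · exact nadj (fun H => by have := Hm u y v H huv; omega) _ _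
      · exact nadj (fun H => by have := Hm v x u H.symm huv.symm; omega) _ _
      · exact nadj (fun H => by have := Hm v y u H.symm huv.symm; omega) _ _
    rcases hcase with ⟨ea, eb⟩ | ⟨ea, eb⟩
    · -- nested
      have embP : IndSub (Jgraph2 3) G := by
        refine embed_J2_3 (a := ⟨p1, by omega⟩) (b := ⟨p2, by omega⟩) (c := ⟨p4, by omega⟩)
          (by simp [Fin.mk_lt_mk]; omega) (by simp [Fin.mk_lt_mk]; omega) ?_ ?_ (ea.adj _ _)
        · exact nadj (fun H => by have := Hm p1 p2 p4 H ea; omega) _ _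
        · exact nadj (fun H => by have := Hm p2 p4 p3 H eb; omega) _ _
      have embR : IndSub Qgraph2 G := by
        refine embed_Q2 (a := ⟨p1, by omega⟩) (b := ⟨p2, by omega⟩) (c := ⟨p3, by omega⟩)
          (d := ⟨p4, by omega⟩) (by simp [Fin.mk_lt_mk]; omega) (by simp [Fin.mk_lt_mk]; omega)
          (by simp [Fin.mk_lt_mk]; omega) (ea.adj _ _) (eb.adj _ _) ?_ ?_ ?_ ?_
        · exact nadj (fun H => by have := Hm p1 p2 p4 H ea; omega) _ _
        · exact nadj (fun H => by have := Hm p1 p3 p4 H ea; omega) _ _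
        · exact nadj (fun H => by have := Hm p2 p4 p3 H eb; omega) _ _
        · exact nadj (fun H => by have := Hm p3 p4 p2 H eb.symm; omega) _ _
      exact ⟨Jgraph2 3, Qgraph2, Jgraph2 4, neQ2J, irred_J2_3, irred_Q2, irred_J2_4,
        embP, embR, embJ24⟩
    · -- crossing
      have embP : IndSub (Jgraph2 3) G := by
        refine embed_J2_3 (a := ⟨p1, by omega⟩) (b := ⟨p2, by omega⟩) (c := ⟨p3, by omega⟩)
          (by simp [Fin.mk_lt_mk]; omega) (by simp [Fin.mk_lt_mk]; omega) ?_ ?_ (ea.adj _ _)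
        · exact nadj (fun H => by have := Hm p1 p2 p3 H ea; omega) _ _
        · exact nadj (fun H => by have := Hm p2 p3 p4 H eb; omega) _ _
      have embR : IndSub Qgraph1 G := by
        refine embed_Q1 (a := ⟨p1, by omega⟩) (b := ⟨p2, by omega⟩) (c := ⟨p3, by omega⟩)
          (d := ⟨p4, by omega⟩) (by simp [Fin.mk_lt_mk]; omega) (by simp [Fin.mk_lt_mk]; omega)
          (by simp [Fin.mk_lt_mk]; omega) (ea.adj _ _) (eb.adj _ _) ?_ ?_ ?_ ?_
        · exact nadj (fun H => by have := Hm p1 p2 p3 H ea; omega) _ _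
        · exact nadj (fun H => by have := Hm p1 p4 p3 H ea; omega) _ _
        · exact nadj (fun H => by have := Hm p2 p3 p4 H eb; omega) _ _
        · exact nadj (fun H => by have := Hm p3 p4 p1 H ea.symm; omega) _ _
      exact ⟨Jgraph2 3, Qgraph1, Jgraph2 4, neQ1J, irred_J2_3, irred_Q1, irred_J2_4,
        embP, embR, embJ24⟩

/-- The key classification: an irreducible ordered graph not in `𝒥` admits good menus. -/
def GoodMenus {h : ℕ} (G : SimpleGraph (Fin h)) : Prop :=
  3 ≤ h ∧
  ((∃ P Q : SimpleGraph (Fin 3), P ≠ Q ∧ IrredGraph P ∧ IrredGraph Q ∧ IndSub P G ∧ IndSub Q G)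
   ∨ (∃ (P : SimpleGraph (Fin 3)) (R S : SimpleGraph (Fin 4)), R ≠ S ∧
        IrredGraph P ∧ IrredGraph R ∧ IrredGraph S ∧ IndSub P G ∧ IndSub R G ∧ IndSub S G))

theorem classification (hirr : IrredGraph G) (hnJ : ¬ InJ G) : GoodMenus G := by
  have h3 : 3 ≤ h := by
    by_contra hc
    exact hnJ (InJ_small hirr (by omega))
  refine ⟨h3, ?_⟩
  -- helper to embed a triple with given adjacency data
  have embt : ∀ a b c : ℕ, a < b → b < c → c < h →
      ∀ P : SimpleGraph (Fin 3),
      (P = Jgraph1 3 ∧ AdV G a b ∧ AdV G b c ∧ AdV G a c) ∨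
      (P = Jgraph2 3 ∧ ¬ AdV G a b ∧ ¬ AdV G b c ∧ AdV G a c) ∨
      (P = Jgraph3 3 ∧ AdV G a b ∧ ¬ AdV G b c ∧ AdV G a c) ∨
      (P = Jgraph4 3 ∧ ¬ AdV G a b ∧ AdV G b c ∧ AdV G a c) ∨
      (P = Lgraph 3 ∧ AdV G a b ∧ AdV G b c ∧ ¬ AdV G a c) → IndSub P G := by
    intro a b c h1 h2 hch P hdata
    have l1 : (⟨a, by omega⟩ : Fin h) < ⟨b, by omega⟩ := by simp [Fin.mk_lt_mk]; omega
    have l2 : (⟨b, by omega⟩ : Fin h) < ⟨c, by omega⟩ := by simp [Fin.mk_lt_mk]; omega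
    rcases hdata with ⟨rfl, e1, e2, e3⟩ | ⟨rfl, e1, e2, e3⟩ | ⟨rfl, e1, e2, e3⟩ |
      ⟨rfl, e1, e2, e3⟩ | ⟨rfl, e1, e2, e3⟩
    · exact embed_J1_3 l1 l2 (e1.adj _ _) (e2.adj _ _) (e3.adj _ _)
    · exact embed_J2_3 l1 l2 (nadj e1 _ _) (nadj e2 _ _) (e3.adj _ _)
    · exact embed_J3_3 l1 l2 (e1.adj _ _) (nadj e2 _ _) (e3.adj _ _)
    · exact embed_J4_3 l1 l2 (nadj e1 _ _) (e2.adj _ _) (e3.adj _ _)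
    · exact embed_L_3 l1 l2 (e1.adj _ _) (e2.adj _ _) (nadj e3 _ _)
  by_cases HT1 : ∃ a b c : ℕ, a < b ∧ b < c ∧ c < h ∧ AdV G a b ∧ AdV G b c ∧ AdV G a c
  · obtain ⟨a, b, c, h1, h2, hch, e1, e2, e3⟩ := HT1
    have embT1 : IndSub (Jgraph1 3) G :=
      embt a b c h1 h2 hch _ (Or.inl ⟨rfl, e1, e2, e3⟩)
    by_cases HX : ∃ a b c : ℕ, a < b ∧ b < c ∧ c < h ∧
        (AdV G a c ∨ (AdV G a b ∧ AdV G b c)) ∧ ¬ (AdV G a b ∧ AdV G b c ∧ AdV G a c)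
    · obtain ⟨x, y, z, g1, g2, gzh, git, gnot⟩ := HX
      left
      by_cases f1 : AdV G x y <;> by_cases f2 : AdV G y z <;> by_cases f3 : AdV G x z
      · exact absurd ⟨f1, f2, f3⟩ gnot
      · exact ⟨Jgraph1 3, Lgraph 3, ne15, irred_J1_3, irred_L_3, embT1,
          embt x y z g1 g2 gzh _ (Or.inr (Or.inr (Or.inr (Or.inr ⟨rfl, f1, f2, f3⟩))))⟩
      · exact ⟨Jgraph1 3, Jgraph3 3, ne13, irred_J1_3, irred_J3_3, embT1,
          embt x y z g1 g2 gzh _ (Or.inr (Or.inr (Or.inl ⟨rfl, f1, f2, f3⟩)))⟩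
      · exact absurd git (by tauto)
      · exact ⟨Jgraph1 3, Jgraph4 3, ne14, irred_J1_3, irred_J4_3, embT1,
          embt x y z g1 g2 gzh _ (Or.inr (Or.inr (Or.inr (Or.inl ⟨rfl, f1, f2, f3⟩))))⟩
      · exact absurd git (by tauto)
      · exact ⟨Jgraph1 3, Jgraph2 3, ne12, irred_J1_3, irred_J2_3, embT1,
          embt x y z g1 g2 gzh _ (Or.inr (Or.inl ⟨rfl, f1, f2, f3⟩))⟩
      · exact absurd git (by tauto)
    · exfalso
      apply hnJ
      left
      apply all_T1 hirr
      intro a' b' c' h1' h2' h3' hit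
      by_contra hcon
      exact HX ⟨a', b', c', h1', h2', h3', hit, hcon⟩
  · by_cases HT5 : ∃ a b c : ℕ, a < b ∧ b < c ∧ c < h ∧ AdV G a b ∧ AdV G b c
    · obtain ⟨a, b, c, h1, h2, hch, e1, e2⟩ := HT5
      have e3 : ¬ AdV G a c := fun H => HT1 ⟨a, b, c, h1, h2, hch, e1, e2, H⟩
      have embT5 : IndSub (Lgraph 3) G :=
        embt a b c h1 h2 hch _ (Or.inr (Or.inr (Or.inr (Or.inr ⟨rfl, e1, e2, e3⟩))))
      by_cases HX : ∃ a b c : ℕ, a < b ∧ b < c ∧ c < h ∧ AdV G a c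
      · obtain ⟨x, y, z, g1, g2, gzh, f3⟩ := HX
        left
        by_cases f1 : AdV G x y <;> by_cases f2 : AdV G y z
        · exact absurd ⟨x, y, z, g1, g2, gzh, f1, f2, f3⟩ HT1
        · exact ⟨Lgraph 3, Jgraph3 3, ne35.symm, irred_L_3, irred_J3_3, embT5,
            embt x y z g1 g2 gzh _ (Or.inr (Or.inr (Or.inl ⟨rfl, f1, f2, f3⟩)))⟩
        · exact ⟨Lgraph 3, Jgraph4 3, ne45.symm, irred_L_3, irred_J4_3, embT5,
            embt x y z g1 g2 gzh _ (Or.inr (Or.inr (Or.inr (Or.inl ⟨rfl, f1, f2, f3⟩))))⟩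
        · exact ⟨Lgraph 3, Jgraph2 3, ne25.symm, irred_L_3, irred_J2_3, embT5,
            embt x y z g1 g2 gzh _ (Or.inr (Or.inl ⟨rfl, f1, f2, f3⟩))⟩
      · exfalso
        apply hnJ
        right; right; right; right; left
        apply all_T5 hirr
        intro a' b' c' h1' h2' h3' hit
        rcases hit with hac | ⟨hab, hbc⟩
        · exact absurd ⟨a', b', c', h1', h2', h3', hac⟩ HX
        · exact ⟨hab, hbc, fun hac => HX ⟨a', b', c', h1', h2', h3', hac⟩⟩
    · -- no triple with both ab and bc
      by_cases HT3 : ∃ a b c : ℕ, a < b ∧ b < c ∧ c < h ∧ AdV G a b ∧ AdV G a c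
      · obtain ⟨a, b, c, h1, h2, hch, e1, e3⟩ := HT3
        have e2 : ¬ AdV G b c := fun H => HT5 ⟨a, b, c, h1, h2, hch, e1, H⟩
        have embT3 : IndSub (Jgraph3 3) G :=
          embt a b c h1 h2 hch _ (Or.inr (Or.inr (Or.inl ⟨rfl, e1, e2, e3⟩)))
        by_cases HT4 : ∃ a b c : ℕ, a < b ∧ b < c ∧ c < h ∧ AdV G b c ∧ AdV G a c
        · obtain ⟨x, y, z, g1, g2, gzh, f2, f3⟩ := HT4
          have f1 : ¬ AdV G x y := fun H => HT5 ⟨x, y, z, g1, g2, gzh, H, f2⟩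
          left
          exact ⟨Jgraph3 3, Jgraph4 3, ne34, irred_J3_3, irred_J4_3, embT3,
            embt x y z g1 g2 gzh _ (Or.inr (Or.inr (Or.inr (Or.inl ⟨rfl, f1, f2, f3⟩))))⟩
        · by_cases HT2 : ∃ a b c : ℕ, a < b ∧ b < c ∧ c < h ∧
              ¬ AdV G a b ∧ ¬ AdV G b c ∧ AdV G a c
          · obtain ⟨x, y, z, g1, g2, gzh, f1, f2, f3⟩ := HT2
            left
            exact ⟨Jgraph3 3, Jgraph2 3, ne23.symm, irred_J3_3, irred_J2_3, embT3,
              embt x y z g1 g2 gzh _ (Or.inr (Or.inl ⟨rfl, f1, f2, f3⟩))⟩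
          · exfalso
            apply hnJ
            right; right; left
            apply all_T3 hirr
            intro a' b' c' h1' h2' h3' hit
            rcases hit with hac | ⟨hab, hbc⟩
            · by_cases hab : AdV G a' b'
              · exact ⟨hab, fun hbc => HT5 ⟨a', b', c', h1', h2', h3', hab, hbc⟩, hac⟩
              · by_cases hbc : AdV G b' c'
                · exact absurd ⟨a', b', c', h1', h2', h3', hbc, hac⟩ HT4
                · exact absurd ⟨a', b', c', h1', h2', h3', hab, hbc, hac⟩ HT2
            · exact absurd ⟨a', b', c', h1', h2', h3', hab, hbc⟩ HT5
      · by_cases HT4 : ∃ a b c : ℕ, a < b ∧ b < c ∧ c < h ∧ AdV G b c ∧ AdV G a c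
        · obtain ⟨a, b, c, h1, h2, hch, e2, e3⟩ := HT4
          have e1 : ¬ AdV G a b := fun H => HT5 ⟨a, b, c, h1, h2, hch, H, e2⟩
          have embT4 : IndSub (Jgraph4 3) G :=
            embt a b c h1 h2 hch _ (Or.inr (Or.inr (Or.inr (Or.inl ⟨rfl, e1, e2, e3⟩))))
          by_cases HT2 : ∃ a b c : ℕ, a < b ∧ b < c ∧ c < h ∧
              ¬ AdV G a b ∧ ¬ AdV G b c ∧ AdV G a c
          · obtain ⟨x, y, z, g1, g2, gzh, f1, f2, f3⟩ := HT2
            left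
            exact ⟨Jgraph4 3, Jgraph2 3, ne24.symm, irred_J4_3, irred_J2_3, embT4,
              embt x y z g1 g2 gzh _ (Or.inr (Or.inl ⟨rfl, f1, f2, f3⟩))⟩
          · exfalso
            apply hnJ
            right; right; right; left
            apply all_T4 hirr
            intro a' b' c' h1' h2' h3' hit
            rcases hit with hac | ⟨hab, hbc⟩
            · by_cases hbc : AdV G b' c'
              · exact ⟨fun hab => HT5 ⟨a', b', c', h1', h2', h3', hab, hbc⟩, hbc, hac⟩
              · by_cases hab : AdV G a' b'
                · exact absurd ⟨a', b', c', h1', h2', h3', hab, hac⟩ HT3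
                · exact absurd ⟨a', b', c', h1', h2', h3', hab, hbc, hac⟩ HT2
            · exact absurd ⟨a', b', c', h1', h2', h3', hab, hbc⟩ HT5
        · -- matching case : derive the sharing property
          have Hm : ∀ x a b : ℕ, AdV G x a → AdV G x b → a = b := by
            intro x a b hxa hxb
            by_contra hne
            have hxa' := hxa.ne
            have hxb' := hxb.ne
            have hah := hxa.ltr
            have hbh := hxb.ltr
            have hxh := hxa.ltl
            rcases (by omega : (x < a ∧ a < b) ∨ (x < b ∧ b < a) ∨ (a < x ∧ x < b) ∨
                (b < x ∧ x < a) ∨ (a < b ∧ b < x) ∨ (b < a ∧ a < x)) with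
              ⟨o1, o2⟩ | ⟨o1, o2⟩ | ⟨o1, o2⟩ | ⟨o1, o2⟩ | ⟨o1, o2⟩ | ⟨o1, o2⟩
            · exact HT3 ⟨x, a, b, o1, o2, hbh, hxa, hxb⟩
            · exact HT3 ⟨x, b, a, o1, o2, hah, hxb, hxa⟩
            · exact HT5 ⟨a, x, b, o1, o2, hbh, hxa.symm, hxb⟩
            · exact HT5 ⟨b, x, a, o1, o2, hah, hxb.symm, hxa⟩
            · exact HT4 ⟨a, b, x, o1, o2, hxh, hxb.symm, hxa.symm⟩
            · exact HT4 ⟨b, a, x, o1, o2, hxh, hxa.symm, hxb.symm⟩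
          right
          exact match_case hirr hnJ h3 Hm

end Classify
/-! ### Piece lists and their ordered sums -/

abbrev Pc : Type := Σ m : ℕ, SimpleGraph (Fin m)

def sizeSum (l : List Pc) : ℕ := (l.map fun p => p.1).sum

@[simp] lemma sizeSum_nil : sizeSum [] = 0 := rfl
@[simp] lemma sizeSum_cons (p : Pc) (l : List Pc) :
    sizeSum (p :: l) = p.1 + sizeSum l := by simp [sizeSum]

def pcAdj : List Pc → ℕ → ℕ → Prop
  | [] => fun _ _ => False
  | p :: l => fun u v =>
      (∃ x y : Fin p.1, p.2.Adj x y ∧ u = (x:ℕ) ∧ v = (y:ℕ)) ∨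
      (p.1 ≤ u ∧ p.1 ≤ v ∧ pcAdj l (u - p.1) (v - p.1))

lemma pcAdj_symm : ∀ (l : List Pc) (u v : ℕ), pcAdj l u v → pcAdj l v u
  | [], _, _, H => H.elim
  | p :: l, u, v, H => by
    rcases H with ⟨x, y, hxy, hu, hv⟩ | ⟨h1, h2, H⟩
    · exact Or.inl ⟨y, x, hxy.symm, hv, hu⟩
    · exact Or.inr ⟨h2, h1, pcAdj_symm l _ _ H⟩

lemma pcAdj_irrefl : ∀ (l : List Pc) (u : ℕ), ¬ pcAdj l u u
  | [], _, H => H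
  | p :: l, u, H => by
    rcases H with ⟨x, y, hxy, hu, hv⟩ | ⟨h1, h2, H⟩
    · have hxyeq : x = y := Fin.val_injective (by omega)
      exact p.2.loopless.irrefl _ (hxyeq ▸ hxy)
    · exact pcAdj_irrefl l _ H

lemma pcAdj_lt : ∀ (l : List Pc) {u v : ℕ}, pcAdj l u v → u < sizeSum l ∧ v < sizeSum l
  | [], _, _, H => H.elim
  | p :: l, u, v, H => by
    rcases H with ⟨x, y, hxy, hu, hv⟩ | ⟨h1, h2, H⟩
    · have := x.isLt; have := y.isLt
      simp only [sizeSum_cons]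
      omega
    · have := pcAdj_lt l H
      simp only [sizeSum_cons]
      omega

def pcGraph (n : ℕ) (l : List Pc) : SimpleGraph (Fin n) where
  Adj u v := pcAdj l (u:ℕ) (v:ℕ)
  symm := ⟨fun u v H => pcAdj_symm l _ _ H⟩
  loopless := ⟨fun u H => pcAdj_irrefl l _ H⟩

def PcValid (l : List Pc) : Prop := ∀ p ∈ l, 1 ≤ p.1 ∧ IrredGraph p.2

def pcCross (l : List Pc) (u : ℕ) : Prop := ∃ i j, pcAdj l i j ∧ i ≤ u ∧ u < j

lemma pcAdj_head (p : Pc) (l : List Pc) (x y : Fin p.1) :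
    p.2.Adj x y ↔ pcAdj (p :: l) (x:ℕ) (y:ℕ) := by
  constructor
  · intro H
    exact Or.inl ⟨x, y, H, rfl, rfl⟩
  · intro H
    rcases H with ⟨x', y', hxy, hu, hv⟩ | ⟨h1, h2, H⟩
    · have hx : x = x' := Fin.val_injective (by omega)
      have hy : y = y' := Fin.val_injective (by omega)
      rw [hx, hy]; exact hxy
    · have := x.isLt; omega

lemma pcAdj_shift (p : Pc) (l : List Pc) (u v : ℕ) :
    pcAdj (p :: l) (p.1 + u) (p.1 + v) ↔ pcAdj l u v := by
  constructor
  · intro H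
    rcases H with ⟨x, y, hxy, hu, hv⟩ | ⟨h1, h2, H⟩
    · have := x.isLt; omega
    · have e1 : p.1 + u - p.1 = u := by omega
      have e2 : p.1 + v - p.1 = v := by omega
      rwa [e1, e2] at H
  · intro H
    refine Or.inr ⟨by omega, by omega, ?_⟩
    have e1 : p.1 + u - p.1 = u := by omega
    have e2 : p.1 + v - p.1 = v := by omega
    rwa [e1, e2]

lemma cross_head {p : Pc} {l : List Pc} (hirr : IrredGraph p.2) {u : ℕ} (hu : u + 1 < p.1) :
    pcCross (p :: l) u := by
  obtain ⟨i, j, hadj, h1, h2⟩ := irred_edge hirr hu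
  exact ⟨(i:ℕ), (j:ℕ), (pcAdj_head p l i j).1 hadj, h1, h2⟩

lemma not_cross_boundary {p : Pc} {l : List Pc} (hp : 1 ≤ p.1) :
    ¬ pcCross (p :: l) (p.1 - 1) := by
  rintro ⟨i, j, H, hi, hj⟩
  rcases H with ⟨x, y, hxy, hu, hv⟩ | ⟨h1, h2, H⟩
  · have := y.isLt; omega
  · omega

lemma pc_inj : ∀ (l1 l2 : List Pc), PcValid l1 → PcValid l2 → sizeSum l1 = sizeSum l2 →
    (∀ u v, pcAdj l1 u v ↔ pcAdj l2 u v) → l1 = l2 := by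
  intro l1
  induction l1 with
  | nil =>
    intro l2 _ hv2 hsz _
    cases l2 with
    | nil => rfl
    | cons q l2 =>
      exfalso
      have := (hv2 q (by simp)).1
      simp only [sizeSum_nil, sizeSum_cons] at hsz
      omega
  | cons p l1 ih =>
    intro l2 hv1 hv2 hsz hadj
    cases l2 with
    | nil =>
      exfalso
      have := (hv1 p (by simp)).1
      simp only [sizeSum_nil, sizeSum_cons] at hsz
      omega
    | cons q l2 =>
      have hp1 := (hv1 p (by simp)).1
      have hq1 := (hv2 q (by simp)).1
      have hpirr := (hv1 p (by simp)).2
      have hqirr := (hv2 q (by simp)).2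
      -- head sizes agree
      have hsize : p.1 = q.1 := by
        rcases lt_trichotomy p.1 q.1 with hlt | heq | hgt
        · exfalso
          have hc : pcCross (q :: l2) (p.1 - 1) := cross_head hqirr (by omega)
          obtain ⟨i, j, H, hi, hj⟩ := hc
          exact not_cross_boundary hp1 ⟨i, j, (hadj i j).2 H, hi, hj⟩
        · exact heq
        · exfalso
          have hc : pcCross (p :: l1) (q.1 - 1) := cross_head hpirr (by omega)
          obtain ⟨i, j, H, hi, hj⟩ := hc
          exact not_cross_boundary hq1 ⟨i, j, (hadj i j).1 H, hi, hj⟩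
      obtain ⟨m, gp⟩ := p
      obtain ⟨m', gq⟩ := q
      simp only at hsize
      subst hsize
      -- head graphs agree
      have hg : gp = gq := by
        ext x y
        rw [pcAdj_head ⟨m, gp⟩ l1 x y, pcAdj_head ⟨m, gq⟩ l2 x y]
        exact hadj _ _
      subst hg
      -- tails agree
      have htail : l1 = l2 := by
        apply ih l2 (fun r hr => hv1 r (by simp [hr])) (fun r hr => hv2 r (by simp [hr]))
        · simp only [sizeSum_cons] at hsz; omega
        · intro u v
          rw [← pcAdj_shift ⟨m, gp⟩ l1 u v, ← pcAdj_shift ⟨m, gp⟩ l2 u v]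
          exact hadj _ _
      rw [htail]

lemma pcGraph_inj {n : ℕ} (l1 l2 : List Pc) (hv1 : PcValid l1) (hv2 : PcValid l2)
    (hs1 : sizeSum l1 = n) (hs2 : sizeSum l2 = n)
    (hg : pcGraph n l1 = pcGraph n l2) : l1 = l2 := by
  apply pc_inj l1 l2 hv1 hv2 (by omega)
  intro u v
  constructor
  · intro H
    have hlt := pcAdj_lt l1 H
    have : (pcGraph n l1).Adj ⟨u, by omega⟩ ⟨v, by omega⟩ := H
    rw [hg] at this
    exact this
  · intro H
    have hlt := pcAdj_lt l2 H
    have : (pcGraph n l2).Adj ⟨u, by omega⟩ ⟨v, by omega⟩ := H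
    rw [← hg] at this
    exact this
/-! ### Offsets of a family sum -/

section FamSum
variable {N s : ℕ} {G : SimpleGraph (Fin N)} {sz : Fin s → ℕ} {Gs : ∀ i, SimpleGraph (Fin (sz i))}

def off (sz : Fin s → ℕ) (i : Fin s) : ℕ := ∑ j ∈ Finset.univ.filter (fun j => j < i), sz j

lemma off_le_sum (i : Fin s) : off sz i + sz i ≤ ∑ j, sz j := by
  have he : Finset.univ.filter (fun j => j ≤ i) = insert i (Finset.univ.filter (fun j => j < i)) := by
    ext j
    simp only [Finset.mem_filter, Finset.mem_univ, true_and, Finset.mem_insert]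
    constructor
    · intro hj
      rcases eq_or_lt_of_le hj with hh | hh
      · exact Or.inl hh
      · exact Or.inr hh
    · rintro (rfl | hj)
      · exact le_rfl
      · exact le_of_lt hj
  have h2 : off sz i + sz i = ∑ j ∈ Finset.univ.filter (fun j => j ≤ i), sz j := by
    rw [he, Finset.sum_insert (by simp)]
    exact Nat.add_comm _ _
  rw [h2]
  exact Finset.sum_le_sum_of_subset (Finset.filter_subset _ _)

lemma off_add_le (hfs : IsFamSum G sz Gs) (i : Fin s) : off sz i + sz i ≤ N := by
  rw [hfs.1]
  exact off_le_sum i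

lemma off_mono {i i' : Fin s} (hii : i < i') : off sz i + sz i ≤ off sz i' := by
  have he : Finset.univ.filter (fun j => j ≤ i) = insert i (Finset.univ.filter (fun j => j < i)) := by
    ext j
    simp only [Finset.mem_filter, Finset.mem_univ, true_and, Finset.mem_insert]
    constructor
    · intro hj
      rcases eq_or_lt_of_le hj with hh | hh
      · exact Or.inl hh
      · exact Or.inr hh
    · rintro (rfl | hj)
      · exact le_rfl
      · exact le_of_lt hj
  have h2 : off sz i + sz i = ∑ j ∈ Finset.univ.filter (fun j => j ≤ i), sz j := by
    rw [he, Finset.sum_insert (by simp)]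
    exact Nat.add_comm _ _
  rw [h2]
  apply Finset.sum_le_sum_of_subset
  intro j hj
  simp only [Finset.mem_filter, Finset.mem_univ, true_and] at hj ⊢
  exact lt_of_le_of_lt hj hii

lemma off_uniq {i i' : Fin s} {x x' : ℕ} (hx : x < sz i) (hx' : x' < sz i')
    (he : off sz i + x = off sz i' + x') : i = i' := by
  rcases lt_trichotomy i i' with hlt | heq | hgt
  · exfalso; have := off_mono (sz := sz) hlt; omega
  · exact heq
  · exfalso; have := off_mono (sz := sz) hgt; omega

lemma famSum_adj (hfs : IsFamSum G sz Gs) (i : Fin s) (x y : Fin (sz i))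
    (hu : off sz i + (x:ℕ) < N) (hv : off sz i + (y:ℕ) < N) :
    G.Adj ⟨off sz i + (x:ℕ), hu⟩ ⟨off sz i + (y:ℕ), hv⟩ ↔ (Gs i).Adj x y := by
  rw [hfs.2]
  constructor
  · rintro ⟨i', x', y', hadj, he1, he2⟩
    have he1' : off sz i + (x:ℕ) = off sz i' + (x':ℕ) := he1
    have he2' : off sz i + (y:ℕ) = off sz i' + (y':ℕ) := he2
    have hii : i = i' := off_uniq x.isLt x'.isLt he1'
    subst hii
    have hx : x = x' := Fin.val_injective (by omega)
    have hy : y = y' := Fin.val_injective (by omega)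
    rw [hx, hy]
    exact hadj
  · intro hadj
    exact ⟨i, x, y, hadj, rfl, rfl⟩

/-- Any vertex of `G` adjacent to something lies in a unique block; adjacency only
within blocks. -/
lemma famSum_block (hfs : IsFamSum G sz Gs) {u v : Fin N} (hadj : G.Adj u v) :
    ∃ (i : Fin s) (x y : Fin (sz i)), (u:ℕ) = off sz i + (x:ℕ) ∧ (v:ℕ) = off sz i + (y:ℕ) := by
  rw [hfs.2] at hadj
  obtain ⟨i, x, y, _, he1, he2⟩ := hadj
  exact ⟨i, x, y, he1, he2⟩

/-- The main embedding lemma: a list of pieces, embedded into increasing blocks,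
embeds as an ordered sum into `G`. -/
lemma EMB (hfs : IsFamSum G sz Gs) :
    ∀ (l : List Pc) (b : ℕ → Fin s),
      (∀ j, j + 1 < l.length → b j < b (j + 1)) →
      (∀ (j : ℕ) (hj : j < l.length), IndSub (l.get ⟨j, hj⟩).2 (Gs (b j))) →
      ∃ φ : ℕ → ℕ,
        (∀ u v, u < v → v < sizeSum l → φ u < φ v) ∧
        (∀ v, v < sizeSum l → off sz (b 0) ≤ φ v ∧ φ v < N) ∧
        (∀ u v, u < sizeSum l → v < sizeSum l →
          (pcAdj l u v ↔ ∃ (hu : φ u < N) (hv : φ v < N), G.Adj ⟨φ u, hu⟩ ⟨φ v, hv⟩)) := by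
  intro l
  induction l with
  | nil =>
    intro b _ _
    exact ⟨fun _ => 0, fun u v _ h => by simp at h, fun v h => by simp at h,
      fun u v h => by simp at h⟩
  | cons p l ih =>
    intro b hchain hemb
    have hemb0 : IndSub p.2 (Gs (b 0)) := hemb 0 (by simp)
    obtain ⟨ψ, hψ⟩ := hemb0
    obtain ⟨φ', hm', hb', ha'⟩ := ih (fun j => b (j + 1))
      (fun j hj => hchain (j + 1) (by simpa using Nat.succ_lt_succ hj))
      (fun j hj => by
        have := hemb (j + 1) (by simpa using Nat.succ_lt_succ hj)
        simpa using this)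
    classical
    refine ⟨fun v => if hv : v < p.1 then off sz (b 0) + (ψ ⟨v, hv⟩ : ℕ) else φ' (v - p.1), ?_, ?_, ?_⟩
    · -- strict mono
      intro u v huv hv
      simp only [sizeSum_cons] at hv
      by_cases hu1 : u < p.1 <;> by_cases hv1 : v < p.1
      · simp only [dif_pos hu1, dif_pos hv1]
        have : ψ ⟨u, hu1⟩ < ψ ⟨v, hv1⟩ := ψ.strictMono (by simp [Fin.mk_lt_mk]; omega)
        have : (ψ ⟨u, hu1⟩ : ℕ) < (ψ ⟨v, hv1⟩ : ℕ) := this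
        omega
      · simp only [dif_pos hu1, dif_neg hv1]
        have hlen : l ≠ [] := by
          intro hnil
          rw [hnil] at hv
          simp at hv
          omega
        have hb01 : b 0 < b 1 := hchain 0 (by
          simp only [List.length_cons]
          have := List.length_pos_iff.2 hlen
          omega)
        have h1 : off sz (b 0) + (ψ ⟨u, hu1⟩ : ℕ) < off sz (b 0) + sz (b 0) := by
          have := (ψ ⟨u, hu1⟩).isLt
          omega
        have h2 : off sz (b 0) + sz (b 0) ≤ off sz (b 1) := off_mono hb01
        have h3 : off sz (b 1) ≤ φ' (v - p.1) := (hb' (v - p.1) (by omega)).1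
        omega
      · omega
      · simp only [dif_neg hu1, dif_neg hv1]
        exact hm' (u - p.1) (v - p.1) (by omega) (by omega)
    · -- bounds
      intro v hv
      simp only [sizeSum_cons] at hv
      by_cases hv1 : v < p.1
      · simp only [dif_pos hv1]
        have h1 := (ψ ⟨v, hv1⟩).isLt
        have h2 := off_add_le hfs (b 0)
        omega
      · simp only [dif_neg hv1]
        have hlen : l ≠ [] := by
          intro hnil
          rw [hnil] at hv
          simp at hv
          omega
        have hb01 : b 0 < b 1 := hchain 0 (by
          simp only [List.length_cons]
          have := List.length_pos_iff.2 hlen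
          omega)
        have h3 := (hb' (v - p.1) (by omega))
        have h31 : off sz (b 1) ≤ φ' (v - p.1) := h3.1
        have h32 : φ' (v - p.1) < N := h3.2
        have h2 : off sz (b 0) + sz (b 0) ≤ off sz (b 1) := off_mono hb01
        exact ⟨by omega, h32⟩
    · -- adjacency
      intro u v hu hv
      simp only [sizeSum_cons] at hu hv
      -- first, a helper for the mixed case
      have mixed : ∀ u' v', u' < p.1 → p.1 ≤ v' → v' < p.1 + sizeSum l →
          ¬ (∃ (h1 : (if h : u' < p.1 then off sz (b 0) + (ψ ⟨u', h⟩ : ℕ) else φ' (u' - p.1)) < N)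
               (h2 : (if h : v' < p.1 then off sz (b 0) + (ψ ⟨v', h⟩ : ℕ) else φ' (v' - p.1)) < N),
             G.Adj ⟨_, h1⟩ ⟨_, h2⟩) := by
        intro u' v' hu1 hv1 hv2
        rintro ⟨h1, h2, hadj⟩
        have hlen : l ≠ [] := by
          intro hnil
          rw [hnil] at hv2
          simp at hv2
          omega
        have hb01 : b 0 < b 1 := hchain 0 (by
          simp only [List.length_cons]
          have := List.length_pos_iff.2 hlen
          omega)
        obtain ⟨i, x, y, he1, he2⟩ := famSum_block hfs hadj
        simp only [dif_pos hu1, dif_neg (by omega : ¬ v' < p.1)] at he1 he2 hadj h1 h2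
        have he1' : off sz (b 0) + ((ψ ⟨u', hu1⟩ : Fin (sz (b 0))) : ℕ) = off sz i + (x:ℕ) := he1
        have he2' : φ' (v' - p.1) = off sz i + (y:ℕ) := he2
        -- φ u' lies in block b 0
        have hi : i = b 0 := off_uniq x.isLt (ψ ⟨u', hu1⟩).isLt he1'.symm
        subst hi
        have hyv : φ' (v' - p.1) = off sz (b 0) + (y:ℕ) := he2'
        have hylt : off sz (b 0) + (y:ℕ) < off sz (b 0) + sz (b 0) := by
          have := y.isLt; omega
        have h3 : off sz (b 0) + sz (b 0) ≤ off sz (b 1) := off_mono hb01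
        have h4 : off sz (b 1) ≤ φ' (v' - p.1) := (hb' (v' - p.1) (by omega)).1
        omega
      by_cases hu1 : u < p.1 <;> by_cases hv1 : v < p.1
      · -- both in head
        have lhs : pcAdj (p :: l) u v ↔ p.2.Adj ⟨u, hu1⟩ ⟨v, hv1⟩ :=
          (pcAdj_head p l ⟨u, hu1⟩ ⟨v, hv1⟩).symm
        rw [lhs, hψ ⟨u, hu1⟩ ⟨v, hv1⟩]
        simp only [dif_pos hu1, dif_pos hv1]
        constructor
        · intro hadj
          have hlt1 : off sz (b 0) + (ψ ⟨u, hu1⟩ : ℕ) < N := by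
            have := (ψ ⟨u, hu1⟩).isLt; have := off_add_le hfs (b 0); omega
          have hlt2 : off sz (b 0) + (ψ ⟨v, hv1⟩ : ℕ) < N := by
            have := (ψ ⟨v, hv1⟩).isLt; have := off_add_le hfs (b 0); omega
          exact ⟨hlt1, hlt2, (famSum_adj hfs (b 0) _ _ hlt1 hlt2).2 hadj⟩
        · rintro ⟨h1, h2, hadj⟩
          exact (famSum_adj hfs (b 0) _ _ h1 h2).1 hadj
      · -- u head, v tail
        constructor
        · intro H
          exfalso
          rcases H with ⟨x, y, hxy, he1, he2⟩ | ⟨hh1, hh2, H⟩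
          · have := y.isLt; omega
          · omega
        · intro H
          exact absurd H (mixed u v hu1 (by omega) (by omega))
      · -- u tail, v head
        constructor
        · intro H
          exfalso
          rcases H with ⟨x, y, hxy, he1, he2⟩ | ⟨hh1, hh2, H⟩
          · have := x.isLt; omega
          · omega
        · rintro ⟨h1, h2, hadj⟩
          exact absurd ⟨h2, h1, hadj.symm⟩ (mixed v u hv1 (by omega) (by omega))
      · -- both tail
        have lhs : pcAdj (p :: l) u v ↔ pcAdj l (u - p.1) (v - p.1) := by
          have he1 : u = p.1 + (u - p.1) := by omega
          have he2 : v = p.1 + (v - p.1) := by omega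
          rw [he1, he2, pcAdj_shift]
          have e1 : p.1 + (u - p.1) - p.1 = u - p.1 := by omega
          have e2 : p.1 + (v - p.1) - p.1 = v - p.1 := by omega
          rw [e1, e2]
        rw [lhs, ha' (u - p.1) (v - p.1) (by omega) (by omega)]
        simp only [dif_neg hu1, dif_neg hv1]

end FamSum
/-! ### Menus and weights -/

noncomputable instance : DecidableEq Pc := Classical.decEq _

def wgt (n m : ℕ) : ℕ := if m < n then 2 ^ (n - 1 - m) else if m = n then 1 else 0

def MenuGood (μ : Finset Pc) {h : ℕ} (B : SimpleGraph (Fin h)) : Prop :=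
  (∀ p ∈ μ, 1 ≤ p.1 ∧ IrredGraph p.2 ∧ IndSub p.2 B) ∧
  (∀ n : ℕ, 1 ≤ n → 2 ^ (n - 1) ≤ ∑ p ∈ μ, wgt n p.1)

lemma pc_ne_fst {m m' : ℕ} {g : SimpleGraph (Fin m)} {g' : SimpleGraph (Fin m')}
    (hne : m ≠ m') : (⟨m, g⟩ : Pc) ≠ ⟨m', g'⟩ :=
  fun he => hne (congrArg Sigma.fst he)

lemma pc_ne_snd {m : ℕ} {g g' : SimpleGraph (Fin m)} (hne : g ≠ g') :
    (⟨m, g⟩ : Pc) ≠ ⟨m, g'⟩ := by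
  intro he
  injection he with h1 h2
  exact hne h2

lemma wgt_lt {n m : ℕ} (hm : m < n) : wgt n m = 2 ^ (n - 1 - m) := if_pos hm

lemma wgt_eq {n : ℕ} : wgt n n = 1 := by simp [wgt]

lemma wgt_gt {n m : ℕ} (hm : n < m) : wgt n m = 0 := by
  rw [wgt, if_neg (by omega), if_neg (by omega)]

lemma wgtA (n : ℕ) (hn : 1 ≤ n) : 2 ^ (n - 1) ≤ wgt n 1 + wgt n 2 + (wgt n 3 + wgt n 3) := by
  rcases (by omega : n = 1 ∨ n = 2 ∨ n = 3 ∨ 4 ≤ n) with rfl | rfl | rfl | h4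
  · simp [wgt]
  · simp [wgt]
  · simp [wgt]
  · obtain ⟨k, rfl⟩ : ∃ k, n = k + 4 := ⟨n - 4, by omega⟩
    have e1 : wgt (k+4) 1 = 2 ^ (k+2) := by rw [wgt_lt (by omega)]; congr 1 <;> omega
    have e2 : wgt (k+4) 2 = 2 ^ (k+1) := by rw [wgt_lt (by omega)]; congr 1 <;> omega
    have e3 : wgt (k+4) 3 = 2 ^ k := by rw [wgt_lt (by omega)]; congr 1 <;> omega
    have e4 : (2:ℕ) ^ (k+2) + 2 ^ (k+1) + (2 ^ k + 2 ^ k) = 2 ^ (k+3) := by ring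
    have e5 : k + 4 - 1 = k + 3 := by omega
    rw [e1, e2, e3, e4, e5]

lemma wgtB (n : ℕ) (hn : 1 ≤ n) :
    2 ^ (n - 1) ≤ wgt n 1 + wgt n 2 + wgt n 3 + (wgt n 4 + wgt n 4) := by
  rcases (by omega : n = 1 ∨ n = 2 ∨ n = 3 ∨ n = 4 ∨ 5 ≤ n) with rfl | rfl | rfl | rfl | h5
  · simp [wgt]
  · simp [wgt]
  · simp [wgt]
  · simp [wgt]
  · obtain ⟨k, rfl⟩ : ∃ k, n = k + 5 := ⟨n - 5, by omega⟩
    have e1 : wgt (k+5) 1 = 2 ^ (k+3) := by rw [wgt_lt (by omega)]; congr 1 <;> omega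
    have e2 : wgt (k+5) 2 = 2 ^ (k+2) := by rw [wgt_lt (by omega)]; congr 1 <;> omega
    have e3 : wgt (k+5) 3 = 2 ^ (k+1) := by rw [wgt_lt (by omega)]; congr 1 <;> omega
    have e4 : wgt (k+5) 4 = 2 ^ k := by rw [wgt_lt (by omega)]; congr 1 <;> omega
    have e5 : (2:ℕ) ^ (k+3) + 2 ^ (k+2) + 2 ^ (k+1) + (2 ^ k + 2 ^ k) = 2 ^ (k+4) := by ring
    have e6 : k + 5 - 1 = k + 4 := by omega
    rw [e1, e2, e3, e4, e5, e6]

/-- Every irreducible block not in `𝒥` has a good menu. -/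
lemma menu_exists {h : ℕ} (B : SimpleGraph (Fin h)) (hirr : IrredGraph B) (hnJ : ¬ InJ B) :
    ∃ μ : Finset Pc, MenuGood μ B := by
  obtain ⟨h3, hcase⟩ := classification hirr hnJ
  have hK1 : IndSub (Jgraph1 1) B := embed_K1 B (by omega)
  have hK2 : IndSub (Jgraph1 2) B := by
    obtain ⟨x, y, hxy, h1, h2⟩ := cross_adv hirr (by omega : (0:ℕ) + 1 < h)
    have hyh := hxy.ltr
    exact embed_K2 (a := ⟨x, by omega⟩) (b := ⟨y, by omega⟩)
      (by simp [Fin.mk_lt_mk]; omega) (hxy.adj _ _)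
  rcases hcase with ⟨P, Q, hne, hiP, hiQ, hsP, hsQ⟩ | ⟨P, R, S, hne, hiP, hiR, hiS, hsP, hsR, hsS⟩
  · refine ⟨{⟨1, Jgraph1 1⟩, ⟨2, Jgraph1 2⟩, ⟨3, P⟩, ⟨3, Q⟩}, ?_, ?_⟩
    · intro p hp
      simp only [Finset.mem_insert, Finset.mem_singleton] at hp
      rcases hp with rfl | rfl | rfl | rfl
      · exact ⟨by norm_num, irred_K1, hK1⟩
      · exact ⟨by norm_num, irred_K2, hK2⟩
      · exact ⟨by norm_num, hiP, hsP⟩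
      · exact ⟨by norm_num, hiQ, hsQ⟩
    · intro n hn
      have d1 : (⟨1, Jgraph1 1⟩ : Pc) ∉ ({⟨2, Jgraph1 2⟩, ⟨3, P⟩, ⟨3, Q⟩} : Finset Pc) := by
        intro hmem
        simp only [Finset.mem_insert, Finset.mem_singleton] at hmem
        rcases hmem with he | he | he
        · exact pc_ne_fst (by omega) he
        · exact pc_ne_fst (by omega) he
        · exact pc_ne_fst (by omega) he
      have d2 : (⟨2, Jgraph1 2⟩ : Pc) ∉ ({⟨3, P⟩, ⟨3, Q⟩} : Finset Pc) := by
        intro hmem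
        simp only [Finset.mem_insert, Finset.mem_singleton] at hmem
        rcases hmem with he | he
        · exact pc_ne_fst (by omega) he
        · exact pc_ne_fst (by omega) he
      have d3 : (⟨3, P⟩ : Pc) ∉ ({⟨3, Q⟩} : Finset Pc) := by
        intro hmem
        simp only [Finset.mem_insert, Finset.mem_singleton] at hmem
        exact pc_ne_snd hne hmem
      rw [Finset.sum_insert d1, Finset.sum_insert d2, Finset.sum_insert d3,
        Finset.sum_singleton]
      have := wgtA n hn
      simp only at this ⊢
      omega
  · refine ⟨{⟨1, Jgraph1 1⟩, ⟨2, Jgraph1 2⟩, ⟨3, P⟩, ⟨4, R⟩, ⟨4, S⟩}, ?_, ?_⟩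
    · intro p hp
      simp only [Finset.mem_insert, Finset.mem_singleton] at hp
      rcases hp with rfl | rfl | rfl | rfl | rfl
      · exact ⟨by norm_num, irred_K1, hK1⟩
      · exact ⟨by norm_num, irred_K2, hK2⟩
      · exact ⟨by norm_num, hiP, hsP⟩
      · exact ⟨by norm_num, hiR, hsR⟩
      · exact ⟨by norm_num, hiS, hsS⟩
    · intro n hn
      have d1 : (⟨1, Jgraph1 1⟩ : Pc) ∉ ({⟨2, Jgraph1 2⟩, ⟨3, P⟩, ⟨4, R⟩, ⟨4, S⟩} : Finset Pc) := by
        intro hmem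
        simp only [Finset.mem_insert, Finset.mem_singleton] at hmem
        rcases hmem with he | he | he | he
        · exact pc_ne_fst (by omega) he
        · exact pc_ne_fst (by omega) he
        · exact pc_ne_fst (by omega) he
        · exact pc_ne_fst (by omega) he
      have d2 : (⟨2, Jgraph1 2⟩ : Pc) ∉ ({⟨3, P⟩, ⟨4, R⟩, ⟨4, S⟩} : Finset Pc) := by
        intro hmem
        simp only [Finset.mem_insert, Finset.mem_singleton] at hmem
        rcases hmem with he | he | he
        · exact pc_ne_fst (by omega) he
        · exact pc_ne_fst (by omega) he
        · exact pc_ne_fst (by omega) he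
      have d3 : (⟨3, P⟩ : Pc) ∉ ({⟨4, R⟩, ⟨4, S⟩} : Finset Pc) := by
        intro hmem
        simp only [Finset.mem_insert, Finset.mem_singleton] at hmem
        rcases hmem with he | he
        · exact pc_ne_fst (by omega) he
        · exact pc_ne_fst (by omega) he
      have d4 : (⟨4, R⟩ : Pc) ∉ ({⟨4, S⟩} : Finset Pc) := by
        intro hmem
        simp only [Finset.mem_insert, Finset.mem_singleton] at hmem
        exact pc_ne_snd hne hmem
      rw [Finset.sum_insert d1, Finset.sum_insert d2, Finset.sum_insert d3,
        Finset.sum_insert d4, Finset.sum_singleton]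
      have := wgtB n hn
      simp only at this ⊢
      omega

/-! ### Counting sequences of pieces -/

noncomputable def seqs (μ : ℕ → Finset Pc) : ℕ → ℕ → Finset (List Pc)
  | 0, _ => {[]}
  | (n+1), j => (μ j).attach.biUnion (fun p =>
      if h : 1 ≤ p.1.1 ∧ p.1.1 ≤ n + 1 then
        (seqs μ (n + 1 - p.1.1) (j + 1)).image (fun l => p.1 :: l)
      else ∅)
  termination_by n _ => n
  decreasing_by omega

lemma seqs_zero (μ : ℕ → Finset Pc) (j : ℕ) : seqs μ 0 j = {[]} := by rw [seqs]

lemma seqs_succ (μ : ℕ → Finset Pc) (n j : ℕ) :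
    seqs μ (n+1) j = (μ j).attach.biUnion (fun p =>
      if h : 1 ≤ p.1.1 ∧ p.1.1 ≤ n + 1 then
        (seqs μ (n + 1 - p.1.1) (j + 1)).image (fun l => p.1 :: l)
      else ∅) := by rw [seqs]

lemma seqs_mem (μ : ℕ → Finset Pc) :
    ∀ n j l, l ∈ seqs μ n j →
      sizeSum l = n ∧ ∀ (t : ℕ) (ht : t < l.length), l.get ⟨t, ht⟩ ∈ μ (j + t) := by
  intro n
  induction n using Nat.strong_induction_on with
  | _ n ih =>
    intro j l hl
    match n with
    | 0 =>
      rw [seqs_zero, Finset.mem_singleton] at hl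
      subst hl
      exact ⟨rfl, fun t ht => absurd ht (by simp)⟩
    | (n+1) =>
      rw [seqs_succ, Finset.mem_biUnion] at hl
      obtain ⟨p, hp, hl⟩ := hl
      by_cases hc : 1 ≤ p.1.1 ∧ p.1.1 ≤ n + 1
      · rw [dif_pos hc, Finset.mem_image] at hl
        obtain ⟨l', hl', rfl⟩ := hl
        obtain ⟨hsz, hget⟩ := ih (n + 1 - p.1.1) (by omega) (j+1) l' hl'
        constructor
        · simp only [sizeSum_cons]
          omega
        · intro t ht
          match t with
          | 0 => simpa using p.2
          | (t+1) =>
            have := hget t (by simpa using Nat.lt_of_succ_lt_succ ht)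
            have he : j + 1 + t = j + (t + 1) := by omega
            rw [he] at this
            simpa using this
      · rw [dif_neg hc] at hl
        simp at hl

lemma seqs_card (μ : ℕ → Finset Pc)
    (W : ∀ j n, 1 ≤ n → 2 ^ (n - 1) ≤ ∑ p ∈ μ j, wgt n p.1)
    (V : ∀ j p, p ∈ μ j → 1 ≤ p.1) :
    ∀ n j, 2 ^ (n - 1) ≤ (seqs μ n j).card := by
  intro n
  induction n using Nat.strong_induction_on with
  | _ n ih =>
    intro j
    match n with
    | 0 => rw [seqs_zero]; simp
    | (n+1) =>
      rw [seqs_succ]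
      rw [Finset.card_biUnion]
      · have hbound : ∀ p ∈ (μ j).attach,
            wgt (n+1) p.1.1 ≤ (if 1 ≤ p.1.1 ∧ p.1.1 ≤ n + 1 then
              (seqs μ (n + 1 - p.1.1) (j + 1)).card else 0) := by
          intro p hp
          have hp1 := V j p.1 p.2
          rcases (by omega : p.1.1 < n + 1 ∨ p.1.1 = n + 1 ∨ n + 1 < p.1.1) with hc | hc | hc
          · rw [wgt_lt hc, if_pos (by omega)]
            have := ih (n + 1 - p.1.1) (by omega) (j + 1)
            have he : n + 1 - p.1.1 - 1 = n + 1 - 1 - p.1.1 := by omega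
            rwa [he] at this
          · rw [hc, wgt_eq, if_pos (by omega)]
            have he : n + 1 - (n + 1) = 0 := by omega
            rw [he, seqs_zero]
            simp
          · rw [wgt_gt hc, if_neg (by omega)]
        have h1 : ∑ p ∈ (μ j).attach, wgt (n+1) p.1.1 ≤
            ∑ p ∈ (μ j).attach, (if 1 ≤ p.1.1 ∧ p.1.1 ≤ n + 1 then
              (seqs μ (n + 1 - p.1.1) (j + 1)).card else 0) :=
          Finset.sum_le_sum hbound
        have h2 : ∑ p ∈ (μ j).attach, wgt (n+1) p.1.1 = ∑ p ∈ μ j, wgt (n+1) p.1 := by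
          rw [← Finset.sum_attach (μ j) (fun p => wgt (n+1) p.1)]
        have h3 := W j (n+1) (by omega)
        calc 2 ^ (n + 1 - 1) ≤ ∑ p ∈ μ j, wgt (n+1) p.1 := h3
          _ = ∑ p ∈ (μ j).attach, wgt (n+1) p.1.1 := h2.symm
          _ ≤ _ := h1
          _ = ∑ p ∈ (μ j).attach, (if h : 1 ≤ p.1.1 ∧ p.1.1 ≤ n + 1 then
              (seqs μ (n + 1 - p.1.1) (j + 1)).image (fun l => p.1 :: l) else ∅).card := by
            apply Finset.sum_congr rfl
            intro p hp
            by_cases hc : 1 ≤ p.1.1 ∧ p.1.1 ≤ n + 1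
            · rw [if_pos hc, dif_pos hc, Finset.card_image_of_injective _
                (fun a b hab => by injection hab)]
            · rw [if_neg hc, dif_neg hc]
              simp
      · -- disjointness
        intro p hp q hq hpq
        simp only [Finset.disjoint_left]
        intro l hlp hlq
        by_cases hc1 : 1 ≤ p.1.1 ∧ p.1.1 ≤ n + 1
        · rw [dif_pos hc1, Finset.mem_image] at hlp
          by_cases hc2 : 1 ≤ q.1.1 ∧ q.1.1 ≤ n + 1
          · rw [dif_pos hc2, Finset.mem_image] at hlq
            obtain ⟨l1, _, he1⟩ := hlp
            obtain ⟨l2, _, he2⟩ := hlq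
            apply hpq
            have hpq1 : p.1 = q.1 := by
              have hcons : p.1 :: l1 = q.1 :: l2 := he1.trans he2.symm
              injection hcons
            exact Subtype.ext hpq1
          · rw [dif_neg hc2] at hlq
            simp at hlq
        · rw [dif_neg hc1] at hlp
          simp at hlp
noncomputable instance {V : Type*} : DecidableEq (SimpleGraph V) := Classical.decEq _

lemma length_le_sizeSum : ∀ (l : List Pc), PcValid l → l.length ≤ sizeSum l
  | [], _ => le_rfl
  | p :: l, hv => by
    have h1 := (hv p (by simp)).1
    have h2 := length_le_sizeSum l (fun q hq => hv q (by simp [hq]))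
    simp only [List.length_cons, sizeSum_cons]
    omega

end MNJ

open MNJ

/-- **Lemma.**  If at least `k` blocks of the irreducible block decomposition of `G` are
not in `𝒥`, then `S_n(G) ≥ 2^{n-1}` for every `n ≤ k`. -/
theorem many_non_J_blocks (N k : ℕ) (hk : 1 ≤ k) (G : SimpleGraph (Fin N))
    (s : ℕ) (sz : Fin s → ℕ) (Gs : ∀ i, SimpleGraph (Fin (sz i)))
    (hdec : IsIrredDecomp G sz Gs)
    (hbad : k ≤ {i : Fin s | ¬ InJ (Gs i)}.ncard) :
    ∀ n : ℕ, n ≤ k → 2 ^ (n - 1) ≤ numSub G n := by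
  intro n hnk
  rcases Nat.eq_zero_or_pos n with rfl | hn1
  · -- n = 0 : the empty graph always embeds
    have hne : ({H : SimpleGraph (Fin 0) | IndSub H G}).Nonempty := by
      refine ⟨⊥, OrderEmbedding.ofStrictMono (fun v => v.elim0) (fun a => a.elim0), ?_⟩
      intro i
      exact i.elim0
    have hfin : ({H : SimpleGraph (Fin 0) | IndSub H G}).Finite := Set.toFinite _
    have hpos := (Set.ncard_pos hfin).2 hne
    exact hpos
  · obtain ⟨hfs, hsz1, hirrall⟩ := hdec
    -- choose n bad blocks, in increasing order
    have hbadfin : ({i : Fin s | ¬ InJ (Gs i)}).Finite := Set.toFinite _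
    have hcard : n ≤ hbadfin.toFinset.card := by
      rw [Set.ncard_eq_toFinset_card _ hbadfin] at hbad
      omega
    obtain ⟨T, hTsub, hTcard⟩ := Finset.exists_subset_card_eq hcard
    set e : Fin n ↪o Fin s := T.orderEmbOfFin hTcard with he
    have hbadT : ∀ i : Fin n, ¬ InJ (Gs (e i)) := by
      intro i
      have hmem := hTsub (Finset.orderEmbOfFin_mem T hTcard i)
      exact (hbadfin.mem_toFinset).1 hmem
    set b : ℕ → Fin s := fun j => e ⟨min j (n-1), by omega⟩ with hb
    have hmenus : ∀ j : ℕ, ∃ μ : Finset Pc, MenuGood μ (Gs (b j)) := fun j =>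
      menu_exists _ (hirrall (b j)) (hbadT _)
    choose μ hμ using hmenus
    have hcount : 2 ^ (n-1) ≤ (seqs μ n 0).card :=
      seqs_card μ (fun j m hm => (hμ j).2 m hm) (fun j p hp => ((hμ j).1 p hp).1) n 0
    have hmemf : ∀ l ∈ seqs μ n 0, sizeSum l = n ∧
        ∀ (t : ℕ) (ht : t < l.length), l.get ⟨t, ht⟩ ∈ μ t := by
      intro l hl
      obtain ⟨h1, h2⟩ := seqs_mem μ n 0 l hl
      exact ⟨h1, fun t ht => by simpa using h2 t ht⟩
    have hvalid : ∀ l ∈ seqs μ n 0, PcValid l := by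
      intro l hl p hp
      obtain ⟨h1, h2⟩ := hmemf l hl
      obtain ⟨⟨t, ht⟩, rfl⟩ := List.mem_iff_get.1 hp
      have := h2 t ht
      exact ⟨((hμ t).1 _ this).1, ((hμ t).1 _ this).2.1⟩
    -- each sequence gives an induced subgraph of G
    have hsub : ∀ l ∈ seqs μ n 0, IndSub (pcGraph n l) G := by
      intro l hl
      obtain ⟨hsz, hget⟩ := hmemf l hl
      have hlen : l.length ≤ n := by
        have := length_le_sizeSum l (hvalid l hl)
        omega
      have hchain : ∀ j, j + 1 < l.length → b j < b (j + 1) := by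
        intro j hj
        have hj1 : j + 1 < n := by omega
        have he1 : b j = e ⟨j, by omega⟩ := by
          rw [hb]
          congr 1
          simp [Fin.ext_iff]
          omega
        have he2 : b (j + 1) = e ⟨j + 1, by omega⟩ := by
          rw [hb]
          congr 1
          simp [Fin.ext_iff]
          omega
        rw [he1, he2]
        exact e.strictMono (by simp [Fin.mk_lt_mk])
      have hpieces : ∀ (j : ℕ) (hj : j < l.length), IndSub (l.get ⟨j, hj⟩).2 (Gs (b j)) :=
        fun j hj => ((hμ j).1 _ (hget j hj)).2.2
      obtain ⟨φ, hmono, hbnd, hadj⟩ := EMB hfs l b hchain hpieces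
      refine ⟨OrderEmbedding.ofStrictMono
        (fun v : Fin n => (⟨φ (v : ℕ), (hbnd (v : ℕ) (by omega)).2⟩ : Fin N)) ?_, ?_⟩
      · intro a c hac
        have := hmono (a : ℕ) (c : ℕ) hac (by omega)
        simpa [Fin.mk_lt_mk] using this
      · intro i j
        have hiff := hadj (i : ℕ) (j : ℕ) (by omega) (by omega)
        constructor
        · intro hA
          obtain ⟨hu, hv, hG⟩ := hiff.1 hA
          exact hG
        · intro hG
          exact hiff.2 ⟨(hbnd (i : ℕ) (by omega)).2, (hbnd (j : ℕ) (by omega)).2, hG⟩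
    -- conclude
    have himg : (((seqs μ n 0).image (pcGraph n) : Finset (SimpleGraph (Fin n))) : Set (SimpleGraph (Fin n)))
        ⊆ {H : SimpleGraph (Fin n) | IndSub H G} := by
      intro H hH
      simp only [Finset.coe_image, Set.mem_image, Finset.mem_coe] at hH
      obtain ⟨l, hl, rfl⟩ := hH
      exact hsub l hl
    have hcardim : ((seqs μ n 0).image (pcGraph n)).card = (seqs μ n 0).card := by
      apply Finset.card_image_of_injOn
      intro l1 hl1 l2 hl2 hgeq
      exact pcGraph_inj l1 l2 (hvalid l1 hl1) (hvalid l2 hl2)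
        (hmemf l1 hl1).1 (hmemf l2 hl2).1 hgeq
    have hfinal := Set.ncard_le_ncard himg (Set.toFinite _)
    rw [Set.ncard_coe_finset, hcardim] at hfinal
    calc 2 ^ (n - 1) ≤ (seqs μ n 0).card := hcount
      _ ≤ {H : SimpleGraph (Fin n) | IndSub H G}.ncard := hfinal
      _ = numSub G n := rfl
end
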